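/- arXiv:2009.08678 — 5 statements merged into one kernel-verified Lean document; each statement's English description precedes it below -/
import Mathlib

section
/- With probability one, lim_{N→∞} M_N / log_{1/√(pq)} N = 1; that is, the length of the longest run of consecutive switches in the first N trials, divided by the base-(1/√(pq)) logarithm of N, converges almost surely to 1. -/
open MeasureTheory ProbabilityTheory Filter
open scoped Classical

/-- `switchCount X n m ω` is the number of switches `S_n^{(m)}` in the `n` trials
`X_m, …, X_{m+n-1}`. -/
def switchCount {Ω : Type*} (X : ℕ → Ω → ℕ) (n m : ℕ) (ω : Ω) : ℕ :=
  ∑ i ∈ Finset.Icc (m + 1) (n + m - 1),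
    ((1 - X (i - 1) ω) * X i ω + X (i - 1) ω * (1 - X i ω))

/-- `longestSwitch X N m ω` is `M_N^{(m)}`, the length of the longest run of consecutive
switches in the trials `X_m, …, X_{m+N-1}`. -/
noncomputable def longestSwitch {Ω : Type*} (X : ℕ → Ω → ℕ) (N m : ℕ) (ω : Ω) : ℕ :=
  ((Finset.Icc 1 N).filter fun n =>
      ∃ i ∈ Finset.Icc m (m + N - n + 1), switchCount X n i ω = n - 1).sup
    fun n => n - 1


/-!
With `r = √(pq)`, a run of `n` switches starting at trial `i` means that `X_i, …, X_{i+n}` follow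
one of the two alternating patterns `0101…`, `1010…`; since consecutive factors multiply to
`pq = r²`, each pattern has probability between `r ^ (n + 2)` and `r ^ n`.

Upper bound: a run of `(1 + ε) log_{1/r} i` switches starts at trial `i` with probability about
`i ^ (-(1 + ε))`, which is summable, so by Borel–Cantelli almost surely only finitely many such runs
occur, and then `M_N ≤ (1 + ε) log_{1/r} N` for large `N`.

Lower bound: with `n = (1 - ε) log_{1/r} N`, cut the first `N` trials into `N / (n + 1)` disjoint,
hence independent, blocks. If `M_N < n` then no block alternates, which has probability at most
`exp (-(N / (n + 1)) r ^ (n + 2)) ≤ N⁻²` for large `N`; Borel–Cantelli again.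
-/

open Finset Function Topology

section

variable {Ω : Type*}

-- `n` switches among the `n + 1` trials `X_i, …, X_{i+n}`.
def switchRun (X : ℕ → Ω → ℕ) (i n : ℕ) : Set Ω :=
  {ω | ∀ k < n, X (i + k) ω ≠ X (i + k + 1) ω}

section Combinatorics

variable {X : ℕ → Ω → ℕ} {ω : Ω}

lemma switchRun_subset_switchRun {i n i' n' : ℕ} (hi : i ≤ i') (hn : i' + n' ≤ i + n) :
    switchRun X i n ⊆ switchRun X i' n' := fun ω h k hk => by
  simpa [show i + (i' - i + k) = i' + k by omega] using h (i' - i + k) (by omega)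

lemma switchTerm_le_one {x y : ℕ} (hx : x ≤ 1) (hy : y ≤ 1) :
    (1 - x) * y + x * (1 - y) ≤ 1 := by
  interval_cases x <;> interval_cases y <;> simp

lemma switchTerm_eq_one_iff {x y : ℕ} (hx : x ≤ 1) (hy : y ≤ 1) :
    (1 - x) * y + x * (1 - y) = 1 ↔ x ≠ y := by
  interval_cases x <;> interval_cases y <;> simp

lemma switchCount_eq_sum_range (n i : ℕ) (ω : Ω) :
    switchCount X n i ω = ∑ k ∈ range (n - 1),
      ((1 - X (i + k) ω) * X (i + k + 1) ω + X (i + k) ω * (1 - X (i + k + 1) ω)) := by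
  rw [switchCount, ← Finset.Ico_add_one_right_eq_Icc, sum_Ico_eq_sum_range]
  refine sum_congr (by congr 1; omega) fun k _ => ?_
  rw [show i + 1 + k = i + k + 1 by omega, Nat.add_sub_cancel]

lemma switchCount_eq_sub_one_iff (hval : ∀ i ω, X i ω ≤ 1) (n i : ℕ) (ω : Ω) :
    switchCount X n i ω = n - 1 ↔ ω ∈ switchRun X i (n - 1) := by
  have key := sum_eq_sum_iff_of_le (s := range (n - 1)) (g := fun _ => 1)
    fun k _ => switchTerm_le_one (hval (i + k) ω) (hval (i + k + 1) ω)
  simp only [sum_const, card_range, smul_eq_mul, mul_one, mem_range] at key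
  rw [switchCount_eq_sum_range, key]
  exact forall₂_congr fun k _ => switchTerm_eq_one_iff (hval _ _) (hval _ _)

lemma le_longestSwitch (hval : ∀ i ω, X i ω ≤ 1) {N i n : ℕ} (hi : 1 ≤ i) (hN : i + n ≤ N)
    (h : ω ∈ switchRun X i n) : n ≤ longestSwitch X N 1 ω := by
  refine le_sup_of_le (b := n + 1) ?_ le_rfl
  simp only [mem_filter, mem_Icc]
  exact ⟨⟨by omega, by omega⟩, i, ⟨hi, by omega⟩,
    (switchCount_eq_sub_one_iff hval _ _ _).2 h⟩

-- The definition admits windows ending at trial `N + 1`.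
lemma longestSwitch_le (hval : ∀ i ω, X i ω ≤ 1) {N m : ℕ}
    (h : ∀ i n, 1 ≤ i → i + n ≤ N + 1 → ω ∈ switchRun X i n → n ≤ m) :
    longestSwitch X N 1 ω ≤ m := by
  refine Finset.sup_le fun n hn => ?_
  simp only [mem_filter, mem_Icc] at hn
  obtain ⟨⟨hn1, hnN⟩, i, ⟨hi1, hi2⟩, hsc⟩ := hn
  exact h i (n - 1) hi1 (by omega) ((switchCount_eq_sub_one_iff hval _ _ _).1 hsc)

lemma longestSwitch_le_max (hval : ∀ i ω, X i ω ≤ 1) {c : ℕ → ℕ} (hc : Monotone c) {I : ℕ}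
    (hI : ∀ i ≥ I, ω ∉ switchRun X i (c i)) (N : ℕ) :
    longestSwitch X N 1 ω ≤ max (I + c I) (c N) := by
  refine longestSwitch_le hval fun i n hi hN h => ?_
  rcases le_or_gt I i with hIi | hiI
  · have hn : n < c i := by
      by_contra! hcn
      exact hI i hIi (switchRun_subset_switchRun le_rfl (by omega) h)
    rcases Nat.eq_zero_or_pos n with rfl | hn0
    · exact Nat.zero_le _
    · exact le_max_of_le_right (hn.le.trans (hc (by omega)))
  · refine le_max_of_le_left ?_
    by_contra! hlong
    exact hI I le_rfl (switchRun_subset_switchRun hiI.le (by omega) h)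

end Combinatorics

section Independence

variable {ι κ β : Type*} [MeasurableSpace Ω] [MeasurableSpace β] [MeasurableSingletonClass β]
  {μ : Measure Ω} {X : ι → Ω → β}

lemma ProbabilityTheory.iIndepFun.measure_forall_eq (h : iIndepFun X μ) (s : Finset ι)
    (v : ι → β) : μ {ω | ∀ k ∈ s, X k ω = v k} = ∏ k ∈ s, μ {ω | X k ω = v k} := by
  rw [show {ω | ∀ k ∈ s, X k ω = v k} = ⋂ k ∈ s, {ω | X k ω = v k} by ext; simp]
  exact h.meas_biInter fun k _ => ⟨{v k}, measurableSet_singleton _, rfl⟩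

lemma measurableSet_forall_eq (hmeas : ∀ i, Measurable (X i)) (s : Finset ι) (v : ι → β) :
    MeasurableSet {ω | ∀ k ∈ s, X k ω = v k} := by
  simp only [Set.ofPred_forall]
  exact .biInter s.countable_toSet fun k _ => hmeas k (measurableSet_singleton (v k))

lemma ProbabilityTheory.iIndepFun.iIndepSet_forall_eq (h : iIndepFun X μ)
    (hmeas : ∀ i, Measurable (X i)) {s : κ → Finset ι} (hs : Pairwise (Disjoint on s))
    (v : ι → β) : iIndepSet (fun j => {ω | ∀ k ∈ s j, X k ω = v k}) μ := by
  refine (iIndepSet_iff_meas_biInter fun j => measurableSet_forall_eq hmeas _ v).2 fun t => ?_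
  rw [show ⋂ j ∈ t, {ω | ∀ k ∈ s j, X k ω = v k} = {ω | ∀ k ∈ t.biUnion s, X k ω = v k} by
      ext; simp only [Set.mem_iInter, Set.mem_ofPred_eq, mem_biUnion]; grind,
    h.measure_forall_eq, prod_biUnion (hs.set_pairwise _)]
  exact prod_congr rfl fun j _ => (h.measure_forall_eq _ _).symm

end Independence

structure IsBernoulliSeq [MeasurableSpace Ω] (μ : Measure Ω) (X : ℕ → Ω → ℕ) (p : ℝ) : Prop where
  measurable : ∀ i, Measurable (X i)
  le_one : ∀ i ω, X i ω ≤ 1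
  measure_eq_one : ∀ i, μ {ω | X i ω = 1} = ENNReal.ofReal p
  indep : iIndepFun X μ

def altPattern (X : ℕ → Ω → ℕ) (b i n : ℕ) : Set Ω :=
  {ω | ∀ k ∈ Ico i (i + n + 1), X k ω = (k + b) % 2}

noncomputable def altWeight (p : ℝ) (b k : ℕ) : ℝ := if (k + b) % 2 = 1 then p else 1 - p

section Patterns

variable {X : ℕ → Ω → ℕ} {ω : Ω} {b i n : ℕ}

lemma altPattern_subset_switchRun : altPattern X b i n ⊆ switchRun X i n := by
  intro ω h k hk
  rw [h (i + k) (by simp only [mem_Ico]; omega), h (i + k + 1) (by simp only [mem_Ico]; omega)]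
  omega

lemma switchRun_subset_union (hval : ∀ i ω, X i ω ≤ 1) :
    switchRun X i n ⊆ altPattern X 0 i n ∪ altPattern X 1 i n := by
  intro ω h
  have hpat : ∀ k ≤ n, X (i + k) ω = (i + k + (X i ω + i) % 2) % 2 := by
    intro k hk
    induction k with
    | zero => have := hval i ω; simp only [add_zero]; omega
    | succ k ih =>
      have := h k (by omega); have := ih (by omega); have := hval (i + k) ω
      have := hval (i + k + 1) ω
      rw [← add_assoc]; omega
  have hmem : ∀ b, b = (X i ω + i) % 2 → ω ∈ altPattern X b i n := by
    rintro b rfl k hk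
    simp only [mem_Ico] at hk
    simpa [show i + (k - i) = k by omega] using hpat _ (show k - i ≤ n by omega)
  rcases Nat.mod_two_eq_zero_or_one (X i ω + i) with h0 | h1
  · exact Or.inl (hmem 0 h0.symm)
  · exact Or.inr (hmem 1 h1.symm)

lemma setOf_longestSwitch_lt_subset (hval : ∀ i ω, X i ω ≤ 1) (N n : ℕ) :
    {ω | longestSwitch X N 1 ω < n} ⊆
      ⋂ j ∈ range (N / (n + 1)), (altPattern X 0 (j * (n + 1) + 1) n)ᶜ := by
  intro ω hω
  simp only [Set.mem_iInter, mem_range, Set.mem_compl_iff]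
  intro j hj hB
  have h1 : (j + 1) * (n + 1) ≤ N / (n + 1) * (n + 1) := Nat.mul_le_mul_right _ hj
  have h2 := Nat.div_mul_le_self N (n + 1)
  rw [add_mul, one_mul] at h1
  exact (le_longestSwitch hval (by omega) (by omega) (altPattern_subset_switchRun hB)).not_gt hω

lemma altWeight_mul_succ (p : ℝ) (b k : ℕ) :
    altWeight p b k * altWeight p b (k + 1) = p * (1 - p) := by
  unfold altWeight
  rcases Nat.mod_two_eq_zero_or_one (k + b) with h | h
  · rw [if_neg (by omega), if_pos (by omega)]; ring
  · rw [if_pos h, if_neg (by omega)]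

lemma altWeight_nonneg {p : ℝ} (hp0 : 0 ≤ p) (hp1 : p ≤ 1) (b k : ℕ) : 0 ≤ altWeight p b k := by
  unfold altWeight; split_ifs <;> linarith

lemma altWeight_le_one {p : ℝ} (hp0 : 0 ≤ p) (hp1 : p ≤ 1) (b k : ℕ) : altWeight p b k ≤ 1 := by
  unfold altWeight; split_ifs <;> linarith

lemma mul_le_altWeight {p : ℝ} (hp0 : 0 ≤ p) (hp1 : p ≤ 1) (b k : ℕ) :
    p * (1 - p) ≤ altWeight p b k := by
  unfold altWeight; split_ifs <;> nlinarith

end Patterns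

section Products

variable {w : ℕ → ℝ} {r : ℝ}

lemma sq_prod_range_succ_of_mul_succ_eq {c : ℝ} (hw : ∀ k, w k * w (k + 1) = c) (i n : ℕ) :
    (∏ k ∈ range (n + 1), w (i + k)) ^ 2 = w i * w (i + n) * c ^ n := by
  induction n with
  | zero => simp [sq]
  | succ n ih => rw [prod_range_succ, mul_pow, ih, ← hw (i + n), ← add_assoc]; ring

lemma prod_range_succ_le_pow (hr : 0 ≤ r) (hw0 : ∀ k, 0 ≤ w k) (hw1 : ∀ k, w k ≤ 1)
    (hw : ∀ k, w k * w (k + 1) = r ^ 2) (i n : ℕ) : ∏ k ∈ range (n + 1), w (i + k) ≤ r ^ n := by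
  refine le_of_pow_le_pow_left₀ two_ne_zero (by positivity) ?_
  rw [sq_prod_range_succ_of_mul_succ_eq hw, ← pow_mul, ← pow_mul, mul_comm n 2]
  exact mul_le_of_le_one_left (by positivity) (mul_le_one₀ (hw1 _) (hw0 _) (hw1 _))

lemma pow_le_prod_range_succ (hw0 : ∀ k, r ^ 2 ≤ w k)
    (hw : ∀ k, w k * w (k + 1) = r ^ 2) (i n : ℕ) :
    r ^ (n + 2) ≤ ∏ k ∈ range (n + 1), w (i + k) := by
  have hw0' : ∀ k, 0 ≤ w k := fun k => (sq_nonneg r).trans (hw0 k)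
  refine le_of_pow_le_pow_left₀ two_ne_zero (prod_nonneg fun k _ => hw0' _) ?_
  rw [sq_prod_range_succ_of_mul_succ_eq hw]
  calc (r ^ (n + 2)) ^ 2 = r ^ 2 * r ^ 2 * (r ^ 2) ^ n := by ring
    _ ≤ w i * w (i + n) * (r ^ 2) ^ n :=
      mul_le_mul_of_nonneg_right (mul_le_mul (hw0 _) (hw0 _) (sq_nonneg r) (hw0' _)) (by positivity)

end Products

section Bernoulli

variable [MeasurableSpace Ω] {μ : Measure Ω} [IsProbabilityMeasure μ] {X : ℕ → Ω → ℕ} {p : ℝ}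

lemma IsBernoulliSeq.measure_eq_altWeight (hX : IsBernoulliSeq μ X p) (hp : 0 ≤ p) (b k : ℕ) :
    μ {ω | X k ω = (k + b) % 2} = ENNReal.ofReal (altWeight p b k) := by
  unfold altWeight
  split_ifs with h
  · rw [h]; exact hX.measure_eq_one k
  · have hc : {ω | X k ω = (k + b) % 2} = {ω | X k ω = 1}ᶜ := by
      ext ω; have := hX.le_one k ω; simp only [Set.mem_ofPred_eq, Set.mem_compl_iff]; omega
    rw [hc, measure_compl (measurableSet_eq_fun (hX.measurable k) measurable_const)
        (measure_ne_top _ _),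
      measure_univ, hX.measure_eq_one, ← ENNReal.ofReal_one, ← ENNReal.ofReal_sub _ hp]

lemma IsBernoulliSeq.measure_altPattern (hX : IsBernoulliSeq μ X p) (hp0 : 0 ≤ p) (hp1 : p ≤ 1)
    (b i n : ℕ) :
    μ (altPattern X b i n) = ENNReal.ofReal (∏ k ∈ range (n + 1), altWeight p b (i + k)) := by
  rw [altPattern, hX.indep.measure_forall_eq, ENNReal.ofReal_prod_of_nonneg, prod_Ico_eq_prod_range]
  · simp only [show i + n + 1 - i = n + 1 by omega, hX.measure_eq_altWeight hp0]
  · exact fun k _ => altWeight_nonneg hp0 hp1 b _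

lemma IsBernoulliSeq.measure_altPattern_le (hX : IsBernoulliSeq μ X p) (hp0 : 0 ≤ p)
    (hp1 : p ≤ 1) (b i n : ℕ) : μ (altPattern X b i n) ≤ ENNReal.ofReal (√(p * (1 - p)) ^ n) := by
  rw [hX.measure_altPattern hp0 hp1]
  refine ENNReal.ofReal_le_ofReal (prod_range_succ_le_pow (Real.sqrt_nonneg _)
    (altWeight_nonneg hp0 hp1 b) (altWeight_le_one hp0 hp1 b) (fun k => ?_) i n)
  rw [altWeight_mul_succ, Real.sq_sqrt (by nlinarith)]

lemma IsBernoulliSeq.le_measure_altPattern (hX : IsBernoulliSeq μ X p) (hp0 : 0 ≤ p)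
    (hp1 : p ≤ 1) (b i n : ℕ) :
    ENNReal.ofReal (√(p * (1 - p)) ^ (n + 2)) ≤ μ (altPattern X b i n) := by
  have hsq : √(p * (1 - p)) ^ 2 = p * (1 - p) := Real.sq_sqrt (by nlinarith)
  rw [hX.measure_altPattern hp0 hp1]
  refine ENNReal.ofReal_le_ofReal (pow_le_prod_range_succ (fun k => ?_) (fun k => ?_) i n)
  · rw [hsq]; exact mul_le_altWeight hp0 hp1 b k
  · rw [altWeight_mul_succ, hsq]

lemma IsBernoulliSeq.measure_switchRun_le (hX : IsBernoulliSeq μ X p) (hp0 : 0 ≤ p)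
    (hp1 : p ≤ 1) (i n : ℕ) : μ (switchRun X i n) ≤ ENNReal.ofReal (2 * √(p * (1 - p)) ^ n) :=
  calc μ (switchRun X i n) ≤ μ (altPattern X 0 i n) + μ (altPattern X 1 i n) :=
        (measure_mono (switchRun_subset_union hX.le_one)).trans (measure_union_le _ _)
    _ ≤ ENNReal.ofReal (√(p * (1 - p)) ^ n) + ENNReal.ofReal (√(p * (1 - p)) ^ n) :=
        add_le_add (hX.measure_altPattern_le hp0 hp1 _ _ _) (hX.measure_altPattern_le hp0 hp1 _ _ _)
    _ = ENNReal.ofReal (2 * √(p * (1 - p)) ^ n) := by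
        rw [← ENNReal.ofReal_add (by positivity) (by positivity), two_mul]

end Bernoulli

section LowerTail

variable [MeasurableSpace Ω] {μ : Measure Ω} {X : ℕ → Ω → ℕ} {p : ℝ}

lemma pairwise_disjoint_Ico_mul_add (m a : ℕ) :
    Pairwise (Disjoint on fun j : ℕ => Ico (j * m + a) (j * m + a + m)) := by
  have key : ∀ j j', j < j' → Disjoint (Ico (j * m + a) (j * m + a + m))
      (Ico (j' * m + a) (j' * m + a + m)) := fun j j' h => by
    have : (j + 1) * m ≤ j' * m := Nat.mul_le_mul_right m h
    rw [disjoint_left]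
    intro k hk hk'
    simp only [mem_Ico] at hk hk'
    rw [add_mul, one_mul] at this
    omega
  intro j j' h
  rcases h.lt_or_gt with h | h
  · exact key j j' h
  · exact (key j' j h).symm

lemma IsBernoulliSeq.iIndepSet_altPattern_blocks (hX : IsBernoulliSeq μ X p) (b n : ℕ) :
    iIndepSet (fun j => altPattern X b (j * (n + 1) + 1) n) μ :=
  hX.indep.iIndepSet_forall_eq hX.measurable (pairwise_disjoint_Ico_mul_add (n + 1) 1) _

variable [IsProbabilityMeasure μ]

lemma IsBernoulliSeq.measure_longestSwitch_lt_le (hX : IsBernoulliSeq μ X p) (hp0 : 0 ≤ p)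
    (hp1 : p ≤ 1) (N n : ℕ) :
    μ {ω | longestSwitch X N 1 ω < n} ≤
      ENNReal.ofReal (Real.exp (-((N / (n + 1) : ℕ) * √(p * (1 - p)) ^ (n + 2)))) := by
  set B := fun j => altPattern X 0 (j * (n + 1) + 1) n
  set x := √(p * (1 - p)) ^ (n + 2)
  have hx0 : 0 ≤ x := by positivity
  have hx1 : x ≤ 1 := pow_le_one₀ (Real.sqrt_nonneg _) (Real.sqrt_le_one.2 (by nlinarith))
  have hB : ∀ j, μ (B j)ᶜ ≤ ENNReal.ofReal (1 - x) := fun j => by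
    rw [prob_compl_eq_one_sub (s := B j) (measurableSet_forall_eq hX.measurable _ _),
      ENNReal.ofReal_sub _ hx0, ENNReal.ofReal_one]
    exact tsub_le_tsub_left (hX.le_measure_altPattern hp0 hp1 _ _ _) 1
  calc μ {ω | longestSwitch X N 1 ω < n} ≤ μ (⋂ j ∈ range (N / (n + 1)), (B j)ᶜ) := 
        measure_mono (setOf_longestSwitch_lt_subset hX.le_one N n)
    _ = ∏ j ∈ range (N / (n + 1)), μ (B j)ᶜ :=
        ((iIndepSet_iff_iIndep _ μ).1 (hX.iIndepSet_altPattern_blocks 0 n)).meas_biInter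
          fun j _ => (MeasurableSpace.measurableSet_generateFrom (Set.mem_singleton _)).compl
    _ ≤ ∏ _j ∈ range (N / (n + 1)), ENNReal.ofReal (1 - x) := prod_le_prod' fun j _ => hB j
    _ = ENNReal.ofReal ((1 - x) ^ (N / (n + 1))) := by
        rw [prod_const, card_range, ENNReal.ofReal_pow (by linarith)]
    _ ≤ ENNReal.ofReal (Real.exp (-((N / (n + 1) : ℕ) * x))) := by
        refine ENNReal.ofReal_le_ofReal ?_
        rw [neg_mul_eq_mul_neg, Real.exp_nat_mul]
        exact pow_le_pow_left₀ (by linarith) (Real.one_sub_le_exp_neg x) _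

end LowerTail

section Asymptotics

variable {r : ℝ}

lemma monotone_logb_natCast {b : ℝ} (hb : 1 < b) : Monotone fun n : ℕ => Real.logb b n := by
  intro i j hij
  rcases Nat.eq_zero_or_pos i with rfl | hi
  · simpa [Real.logb] using div_nonneg (Real.log_natCast_nonneg j) (Real.log_pos hb).le
  · exact Real.logb_le_logb_of_le hb (by exact_mod_cast hi) (by exact_mod_cast hij)

lemma rpow_mul_logb_one_div (hr0 : 0 < r) (hr1 : r < 1) (t : ℝ) {x : ℝ} (hx : 0 < x) :
    r ^ (t * Real.logb (1 / r) x) = (x ^ t)⁻¹ := by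
  have hb : 1 < 1 / r := one_lt_one_div hr0 hr1
  calc r ^ (t * Real.logb (1 / r) x) = ((1 / r) ^ (Real.logb (1 / r) x * t))⁻¹ := by
        rw [← Real.inv_rpow (by positivity), one_div, inv_inv, mul_comm]
    _ = (x ^ t)⁻¹ := by rw [Real.rpow_mul (by positivity), Real.rpow_logb (by positivity) hb.ne' hx]

lemma pow_ceil_mul_logb_le (hr0 : 0 < r) (hr1 : r < 1) {t x : ℝ} (hx : 0 < x) :
    r ^ ⌈t * Real.logb (1 / r) x⌉₊ ≤ (x ^ t)⁻¹ := by
  rw [← rpow_mul_logb_one_div hr0 hr1 t hx, ← Real.rpow_natCast]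
  exact Real.rpow_le_rpow_of_exponent_ge hr0 hr1.le (Nat.le_ceil _)

lemma mul_rpow_inv_le_pow (hr0 : 0 < r) (hr1 : r < 1) {t x : ℝ} (hx : 0 < x) {n : ℕ}
    (hn : (n : ℝ) ≤ t * Real.logb (1 / r) x + 1) : r ^ 3 * (x ^ t)⁻¹ ≤ r ^ (n + 2) := by
  rw [← rpow_mul_logb_one_div hr0 hr1 t hx, ← Real.rpow_natCast, ← Real.rpow_natCast,
    ← Real.rpow_add hr0]
  refine Real.rpow_le_rpow_of_exponent_ge hr0 hr1.le ?_
  push_cast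
  linarith

lemma rpow_div_sub_one_le_div_mul_pow (hr0 : 0 < r) (hr1 : r < 1) {ε : ℝ} (hε1 : ε ≤ 1)
    {N n : ℕ} (hN : 1 ≤ N) (hn : (n : ℝ) ≤ (1 - ε) * Real.logb (1 / r) N + 1) :
    r ^ 3 * ((N : ℝ) ^ ε / (n + 1) - 1) ≤ (N / (n + 1) : ℕ) * r ^ (n + 2) := by
  have hN' : (1 : ℝ) ≤ N := by exact_mod_cast hN
  have hK : (N : ℝ) / (n + 1) - 1 ≤ (N / (n + 1) : ℕ) := by
    have h : (N : ℝ) ≤ (N / (n + 1) : ℕ) * (n + 1) + (n + 1) := by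
      exact_mod_cast (Nat.lt_div_mul_add (a := N) (Nat.succ_pos n)).le
    rw [sub_le_iff_le_add, div_le_iff₀ (by positivity)]
    linarith
  set y := r ^ 3 * ((N : ℝ) ^ (1 - ε))⁻¹ with hy_def
  have hy : y ≤ r ^ (n + 2) := mul_rpow_inv_le_pow hr0 hr1 (by positivity) hn
  have hy3 : y ≤ r ^ 3 := mul_le_of_le_one_right (by positivity)
    (inv_le_one_of_one_le₀ (Real.one_le_rpow hN' (by linarith)))
  have hNy : N * y = r ^ 3 * (N : ℝ) ^ ε := by
    rw [hy_def, Real.rpow_sub (by positivity), Real.rpow_one]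
    field_simp
  calc r ^ 3 * ((N : ℝ) ^ ε / (n + 1) - 1) ≤ r ^ 3 * (N : ℝ) ^ ε / (n + 1) - y := by
        rw [mul_sub, mul_one, mul_div_assoc]; linarith
    _ = ((N : ℝ) / (n + 1) - 1) * y := by rw [← hNy]; field_simp
    _ ≤ (N / (n + 1) : ℕ) * y := mul_le_mul_of_nonneg_right hK (by positivity)
    _ ≤ (N / (n + 1) : ℕ) * r ^ (n + 2) := mul_le_mul_of_nonneg_left hy (by positivity)

lemma eventually_mul_log_sq_le_rpow {C ε : ℝ} (hC : 0 < C) (hε : 0 < ε) :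
    ∀ᶠ N : ℕ in atTop, C * Real.log N ^ 2 ≤ (N : ℝ) ^ ε := by
  filter_upwards [tendsto_natCast_atTop_atTop.eventually
    ((isLittleO_log_rpow_rpow_atTop 2 hε).bound (inv_pos.2 hC))] with N hN
  rw [Real.rpow_two, Real.norm_of_nonneg (sq_nonneg _),
    Real.norm_of_nonneg (Real.rpow_nonneg N.cast_nonneg _), ← div_eq_inv_mul,
    le_div_iff₀' hC] at hN
  exact hN


lemma eventually_two_mul_log_le (hr0 : 0 < r) (hr1 : r < 1) {ε : ℝ} (hε : 0 < ε) (hε1 : ε ≤ 1) :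
    ∀ᶠ N : ℕ in atTop, 2 * Real.log N ≤ (N / (⌈(1 - ε) * Real.logb (1 / r) N⌉₊ + 1) : ℕ) *
      r ^ (⌈(1 - ε) * Real.logb (1 / r) N⌉₊ + 2) := by
  set β := Real.log (1 / r)
  have hβ : 0 < β := Real.log_pos (one_lt_one_div hr0 hr1)
  filter_upwards [eventually_mul_log_sq_le_rpow (C := (1 / β + 2) * (2 / r ^ 3 + 1))
      (by positivity) hε,
    tendsto_natCast_atTop_atTop.eventually (Real.tendsto_log_atTop.eventually_ge_atTop 1),
    eventually_ge_atTop 1] with N hC hl hN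
  set n := ⌈(1 - ε) * Real.logb (1 / r) N⌉₊
  set l := Real.log N
  have hL : Real.logb (1 / r) N = l / β := rfl
  have hlβ : 0 ≤ l / β := div_nonneg (by linarith) hβ.le
  have hn : (n : ℝ) ≤ (1 - ε) * Real.logb (1 / r) N + 1 :=
    (Nat.ceil_lt_add_one (hL ▸ mul_nonneg (sub_nonneg.2 hε1) hlβ)).le
  have hεL : (1 - ε) * Real.logb (1 / r) N ≤ l / β := by rw [hL]; nlinarith
  have hbig : ((n : ℝ) + 1) * (2 * l / r ^ 3 + 1) ≤ (N : ℝ) ^ ε :=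
    calc ((n : ℝ) + 1) * (2 * l / r ^ 3 + 1) ≤ (l / β + 2) * (2 * l / r ^ 3 + 1) :=
          mul_le_mul_of_nonneg_right (by linarith) (by positivity)
      _ ≤ (1 / β + 2) * l * ((2 / r ^ 3 + 1) * l) := by
          gcongr
          · rw [add_mul, div_mul_eq_mul_div, one_mul]; linarith
          · rw [add_mul, div_mul_eq_mul_div]; linarith
      _ = (1 / β + 2) * (2 / r ^ 3 + 1) * l ^ 2 := by ring
      _ ≤ (N : ℝ) ^ ε := hC
  refine le_trans ?_ (rpow_div_sub_one_le_div_mul_pow hr0 hr1 hε1 hN hn)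
  have : 2 * l / r ^ 3 + 1 ≤ (N : ℝ) ^ ε / (n + 1) := by
    rw [le_div_iff₀ (by positivity)]; linarith
  calc 2 * l = r ^ 3 * (2 * l / r ^ 3) := by field_simp
    _ ≤ r ^ 3 * ((N : ℝ) ^ ε / (n + 1) - 1) := by gcongr; linarith

end Asymptotics

lemma ae_eventually_notMem_of_summable [MeasurableSpace Ω] {μ : Measure Ω} [IsFiniteMeasure μ]
    {s : ℕ → Set Ω} {f : ℕ → ℝ} (hf0 : ∀ n, 0 ≤ f n) (hf : Summable f)
    (h : ∀ᶠ n in atTop, μ (s n) ≤ ENNReal.ofReal (f n)) :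
    ∀ᵐ ω ∂μ, ∀ᶠ n in atTop, ω ∉ s n := by
  have hs : Summable fun n => μ.real (s n) := hf.of_norm_bounded_eventually_nat <| h.mono
    fun n hn => by
      rw [Real.norm_of_nonneg measureReal_nonneg]
      exact ENNReal.toReal_le_of_le_ofReal (hf0 n) hn
  refine ae_eventually_notMem (ne_of_eq_of_ne (tsum_congr fun n => (ofReal_measureReal).symm) ?_)
  rw [← ENNReal.ofReal_tsum_of_nonneg (fun _ => measureReal_nonneg) hs]
  exact ENNReal.ofReal_ne_top

lemma sqrt_mul_one_sub_pos {p : ℝ} (hp0 : 0 < p) (hp1 : p < 1) : 0 < √(p * (1 - p)) :=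
  Real.sqrt_pos.2 (mul_pos hp0 (sub_pos.2 hp1))

lemma sqrt_mul_one_sub_lt_one (p : ℝ) : √(p * (1 - p)) < 1 :=
  (Real.sqrt_lt' one_pos).2 (by nlinarith [sq_nonneg (p - 1 / 2)])

section AlmostSure

variable [MeasurableSpace Ω] {μ : Measure Ω} [IsProbabilityMeasure μ] {X : ℕ → Ω → ℕ} {p : ℝ}

lemma IsBernoulliSeq.ae_eventually_longestSwitch_le (hX : IsBernoulliSeq μ X p) (hp0 : 0 < p)
    (hp1 : p < 1) {ε : ℝ} (hε : 0 < ε) :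
    ∀ᵐ ω ∂μ, ∀ᶠ N : ℕ in atTop,
      (longestSwitch X N 1 ω : ℝ) ≤ (1 + ε) * Real.logb (1 / √(p * (1 - p))) N := by
  set r := √(p * (1 - p))
  have hr0 : 0 < r := sqrt_mul_one_sub_pos hp0 hp1
  have hr1 : r < 1 := sqrt_mul_one_sub_lt_one p
  have hb : 1 < 1 / r := one_lt_one_div hr0 hr1
  set c : ℕ → ℕ := fun i => ⌈(1 + ε / 2) * Real.logb (1 / r) i⌉₊
  have hc : Monotone c := fun i j hij =>
    Nat.ceil_mono (mul_le_mul_of_nonneg_left (monotone_logb_natCast hb hij) (by positivity))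
  have hBC : ∀ᵐ ω ∂μ, ∀ᶠ i in atTop, ω ∉ switchRun X i (c i) := by
    refine ae_eventually_notMem_of_summable (f := fun i => 2 * ((i : ℝ) ^ (1 + ε / 2))⁻¹)
      (fun _ => by positivity) ((Real.summable_nat_rpow_inv.2 (by linarith)).mul_left 2) ?_
    filter_upwards [eventually_ge_atTop 1] with i hi
    refine (hX.measure_switchRun_le hp0.le hp1.le i (c i)).trans (ENNReal.ofReal_le_ofReal ?_)
    gcongr
    exact pow_ceil_mul_logb_le hr0 hr1 (by exact_mod_cast hi)
  filter_upwards [hBC] with ω hω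
  obtain ⟨I, hI⟩ := eventually_atTop.1 hω
  have hL := (Real.tendsto_logb_atTop hb).comp tendsto_natCast_atTop_atTop
  filter_upwards [hL.eventually_ge_atTop (I + c I : ℝ), hL.eventually_ge_atTop (2 / ε)]
    with N hN1 hN2
  simp only [comp_apply] at hN1 hN2
  have hLpos : 0 < Real.logb (1 / r) N := lt_of_lt_of_le (by positivity) hN2
  have hcN : (c N : ℝ) ≤ (1 + ε) * Real.logb (1 / r) N := by
    have := Nat.ceil_lt_add_one (show 0 ≤ (1 + ε / 2) * Real.logb (1 / r) N by positivity)
    rw [div_le_iff₀ hε] at hN2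
    nlinarith
  have hM := longestSwitch_le_max hX.le_one hc hI N
  calc (longestSwitch X N 1 ω : ℝ) ≤ max (I + c I : ℝ) (c N) := by exact_mod_cast hM
    _ ≤ (1 + ε) * Real.logb (1 / r) N := max_le (by nlinarith) hcN

lemma IsBernoulliSeq.ae_eventually_le_longestSwitch (hX : IsBernoulliSeq μ X p) (hp0 : 0 < p)
    (hp1 : p < 1) {ε : ℝ} (hε : 0 < ε) (hε1 : ε ≤ 1) :
    ∀ᵐ ω ∂μ, ∀ᶠ N : ℕ in atTop,
      (1 - ε) * Real.logb (1 / √(p * (1 - p))) N ≤ longestSwitch X N 1 ω := by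
  set r := √(p * (1 - p))
  have hr0 : 0 < r := sqrt_mul_one_sub_pos hp0 hp1
  have hr1 : r < 1 := sqrt_mul_one_sub_lt_one p
  have hBC : ∀ᵐ ω ∂μ, ∀ᶠ N in atTop,
      ω ∉ {ω | longestSwitch X N 1 ω < ⌈(1 - ε) * Real.logb (1 / r) N⌉₊} := by
    refine ae_eventually_notMem_of_summable (f := fun N => ((N : ℝ) ^ 2)⁻¹)
      (fun _ => by positivity) (Real.summable_nat_pow_inv.2 one_lt_two) ?_
    filter_upwards [eventually_two_mul_log_le hr0 hr1 hε hε1, eventually_ge_atTop 1] with N hN hN1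
    refine (hX.measure_longestSwitch_lt_le hp0.le hp1.le N _).trans (ENNReal.ofReal_le_ofReal ?_)
    calc Real.exp (-(_ * _)) ≤ Real.exp (-(2 * Real.log N)) := Real.exp_le_exp.2 (neg_le_neg hN)
      _ = ((N : ℝ) ^ 2)⁻¹ := by
        rw [Real.exp_neg, ← Real.log_rpow (by positivity), Real.exp_log (by positivity),
          Real.rpow_two]
  filter_upwards [hBC] with ω hω
  filter_upwards [hω] with N hN
  simp only [not_lt] at hN
  exact (Nat.le_ceil _).trans (by exact_mod_cast hN)

end AlmostSure

end

lemma tendsto_div_of_forall_nat_eventually_le {f g : ℕ → ℝ} (hg : ∀ᶠ N in atTop, 0 < g N)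
    (h : ∀ k : ℕ, ∀ᶠ N in atTop,
      (1 - 1 / (k + 1)) * g N ≤ f N ∧ f N ≤ (1 + 1 / (k + 1)) * g N) :
    Tendsto (fun N => f N / g N) atTop (𝓝 1) := by
  refine Metric.tendsto_nhds.2 fun δ hδ => ?_
  obtain ⟨k, hk⟩ := exists_nat_one_div_lt hδ
  filter_upwards [h k, hg] with N ⟨hlow, hup⟩ hgN
  rw [Real.dist_eq, abs_sub_lt_iff, sub_lt_iff_lt_add', sub_lt_comm, div_lt_iff₀ hgN,
    lt_div_iff₀ hgN]
  constructor <;> nlinarith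

theorem longestSwitch_div_logb_tendsto_one
    {Ω : Type*} [MeasurableSpace Ω] (μ : Measure Ω) [IsProbabilityMeasure μ]
    (p q : ℝ) (hp0 : 0 < p) (hp1 : p < 1) (hq : q = 1 - p)
    (X : ℕ → Ω → ℕ)
    (hmeas : ∀ i, Measurable (X i))
    (hval : ∀ i ω, X i ω ≤ 1)
    (hdist : ∀ i, μ {ω | X i ω = 1} = ENNReal.ofReal p)
    (hindep : iIndepFun X μ) :
    ∀ᵐ ω ∂μ, Tendsto
      (fun N : ℕ => (longestSwitch X N 1 ω : ℝ) / Real.logb (1 / Real.sqrt (p * q)) (N : ℝ))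
      atTop (nhds 1) := by
  subst hq
  have hX : IsBernoulliSeq μ X p := ⟨hmeas, hval, hdist, hindep⟩
  have hb : 1 < 1 / √(p * (1 - p)) :=
    one_lt_one_div (sqrt_mul_one_sub_pos hp0 hp1) (sqrt_mul_one_sub_lt_one p)
  have hL := (Real.tendsto_logb_atTop hb).comp tendsto_natCast_atTop_atTop
  have hbounds : ∀ k : ℕ, ∀ᵐ ω ∂μ, ∀ᶠ N : ℕ in atTop,
      (1 - 1 / (k + 1)) * Real.logb (1 / √(p * (1 - p))) N ≤ longestSwitch X N 1 ω ∧
      (longestSwitch X N 1 ω : ℝ) ≤ (1 + 1 / (k + 1)) * Real.logb (1 / √(p * (1 - p))) N := by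
    intro k
    have hk : (0 : ℝ) < 1 / (k + 1) := by positivity
    have hk1 : 1 / ((k : ℝ) + 1) ≤ 1 :=
      div_le_one_of_le₀ (by linarith [k.cast_nonneg (α := ℝ)]) (by positivity)
    filter_upwards [hX.ae_eventually_le_longestSwitch hp0 hp1 hk hk1,
      hX.ae_eventually_longestSwitch_le hp0 hp1 hk] with ω hlow hup
    exact hlow.and hup
  filter_upwards [ae_all_iff.2 hbounds] with ω hω
  exact tendsto_div_of_forall_nat_eventually_le (hL.eventually_gt_atTop 0) hω
end

section
/- Let {γ_n} be a sequence of positive numbers such that ∑_{n=1}^∞ (pq)^{γ_n/2} = ∞. Then for almost every ω in the sample space there exists an infinite increasing sequence of integers N_i = N_i(ω,{γ_n}), i = 1,2,…, such that M_{N_i}(ω) ≥ γ_{N_i} − 1. -/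
open MeasureTheory ProbabilityTheory Filter
open scoped Classical

/-!
Let `E n` be the event that the `⌈γ n⌉` trials ending at `n` follow the alternating pattern
`X t = t % 2`; on `E n` one has `M_n ≥ ⌈γ n⌉ - 1 ≥ γ n - 1`. Consecutive trials match the
pattern with probability `p q`, so `P(E n)` is comparable to `(pq)^(γ n / 2)` and `∑ P(E n) = ∞`
(the indices with `γ n > n`, where no such run fits, only remove a geometric series).
The events are not independent, but a run ending at `j` that meets a run ending at `i < j` must
also fix the `j - i` trials after `i`, whence `P(E i ∩ E j) ≤ P(E i) (P(E j) + (pq)^((j-i)/2))`.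
This quasi-independence suffices for the second Borel–Cantelli lemma: integrating
`2 c F ≤ 1_{F > 0} + c² F²` for `F = ∑_{i ∈ T} 1_{E i}` gives
`P(⋃_{i ∈ T} E i) ≥ 2 c ∑ P(E i) - c² ∑∑ P(E i ∩ E j)`, which tends to `1` for `c = (∑ P(E i))⁻¹`.
-/

open Finset
open scoped ENNReal

theorem ENNReal.two_mul_le_one_add_sq (x : ℝ≥0∞) : 2 * x ≤ 1 + x ^ 2 := by
  induction x using ENNReal.recTopCoe with
  | top => simp
  | coe x =>
    norm_cast
    simpa [add_comm] using two_mul_le_add_sq x 1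

theorem ENNReal.tsum_ofReal_eq_top {α : Type*} {f : α → ℝ} (hf : ∀ a, 0 ≤ f a)
    (h : ¬Summable f) : ∑' a, ENNReal.ofReal (f a) = ∞ := by
  by_contra hne
  exact h ((ENNReal.summable_toReal hne).congr fun a => ENNReal.toReal_ofReal (hf a))

theorem ENNReal.tsum_pow_div_two_ne_top {r : ℝ≥0∞} (hr : r < 1) : ∑' d, r ^ (d / 2) ≠ ∞ := by
  rw [← tsum_even_add_odd ENNReal.summable ENNReal.summable]
  simp only [show ∀ k, 2 * k / 2 = k by omega, show ∀ k, (2 * k + 1) / 2 = k by omega,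
    ENNReal.tsum_geometric, ne_eq, ENNReal.add_eq_top, ENNReal.inv_eq_top, tsub_eq_zero_iff_le,
    not_le.mpr hr, or_self, not_false_eq_true]

theorem ENNReal.tsum_inter_Ici_eq_top {f : ℕ → ℝ≥0∞} (hf : ∀ n, f n ≠ ∞) {S : Set ℕ}
    (h : ∑' n : S, f n = ∞) (m : ℕ) : ∑' n : ↑(S ∩ Set.Ici m), f n = ∞ := by
  have hhead : ∑' n : ↑(S \ Set.Ici m), f n ≠ ∞ := by
    refine ne_top_of_le_ne_top ?_ (ENNReal.tsum_mono_subtype f (t := ↑(range m)) ?_)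
    · exact (Finset.tsum_subtype (range m) f).trans_ne
        (ENNReal.sum_ne_top.mpr fun n _ => hf n)
    · intro n hn
      simpa using hn.2
  have := ENNReal.tsum_union_le f (S ∩ Set.Ici m) (S \ Set.Ici m)
  rw [Set.inter_union_sdiff, h, top_le_iff, ENNReal.add_eq_top] at this
  exact this.resolve_right hhead

section SecondMoment

variable {Ω : Type*} [MeasurableSpace Ω] {μ : Measure Ω}

theorem two_mul_sum_measure_le {ι : Type*} {A : ι → Set Ω} (hA : ∀ i, MeasurableSet (A i))
    (T : Finset ι) (c : ℝ≥0∞) :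
    2 * c * ∑ i ∈ T, μ (A i) ≤ μ (⋃ i ∈ T, A i) + c ^ 2 * ∑ i ∈ T, ∑ j ∈ T, μ (A i ∩ A j) := by
  set U := ⋃ i ∈ T, A i
  set F : Ω → ℝ≥0∞ := fun ω => ∑ i ∈ T, (A i).indicator 1 ω
  have hF : Measurable F := Finset.measurable_sum _ fun i _ => measurable_one.indicator (hA i)
  have hU : MeasurableSet U := MeasurableSet.biUnion T.countable_toSet fun i _ => hA i
  have hF_sq : ∀ ω, F ω * F ω = ∑ i ∈ T, ∑ j ∈ T, (A i ∩ A j).indicator 1 ω := fun ω => by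
    simp only [F, sum_mul_sum, Set.inter_indicator_one, Pi.mul_apply]
  have hpoint : ∀ ω, 2 * c * F ω ≤ U.indicator 1 ω + c ^ 2 * (F ω * F ω) := fun ω => by
    by_cases hω : ω ∈ U
    · calc 2 * c * F ω = 2 * (c * F ω) := mul_assoc _ _ _
        _ ≤ 1 + (c * F ω) ^ 2 := ENNReal.two_mul_le_one_add_sq _
        _ = U.indicator 1 ω + c ^ 2 * (F ω * F ω) := by
          rw [Set.indicator_of_mem hω, Pi.one_apply]; ring
    · have : F ω = 0 := sum_eq_zero fun i hi =>
        Set.indicator_of_notMem (fun h => hω (Set.mem_biUnion hi h)) _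
      simp [this]
  have hlintegral : ∀ {B : ι → Set Ω}, (∀ i, MeasurableSet (B i)) →
      ∫⁻ ω, ∑ i ∈ T, (B i).indicator 1 ω ∂μ = ∑ i ∈ T, μ (B i) := fun hB => by
    rw [lintegral_finsetSum _ fun i _ => measurable_one.indicator (hB i)]
    simp only [lintegral_indicator_one (hB _)]
  calc 2 * c * ∑ i ∈ T, μ (A i) = ∫⁻ ω, 2 * c * F ω ∂μ := by
        rw [lintegral_const_mul _ hF, hlintegral hA]
    _ ≤ ∫⁻ ω, U.indicator 1 ω + c ^ 2 * (F ω * F ω) ∂μ := lintegral_mono hpoint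
    _ = μ U + c ^ 2 * ∑ i ∈ T, ∑ j ∈ T, μ (A i ∩ A j) := by
        rw [lintegral_add_left (measurable_one.indicator hU), lintegral_indicator_one hU,
          lintegral_const_mul (f := fun ω => F ω * F ω) _ (hF.mul hF)]
        simp only [hF_sq]
        rw [lintegral_finsetSum _ fun i _ => Finset.measurable_sum _ fun j _ =>
          measurable_one.indicator ((hA i).inter (hA j))]
        simp only [hlintegral fun j => (hA _).inter (hA j)]

theorem sum_sum_measure_inter_le {A : ℕ → Set Ω} (v : ℕ → ℝ≥0∞) {T : Finset ℕ}
    (hpair : ∀ i ∈ T, ∀ j ∈ T, i < j → μ (A i ∩ A j) ≤ μ (A i) * (μ (A j) + v (j - i))) :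
    ∑ i ∈ T, ∑ j ∈ T, μ (A i ∩ A j)
      ≤ (∑ i ∈ T, μ (A i)) ^ 2 + (1 + 2 * ∑' d, v d) * ∑ i ∈ T, μ (A i) := by
  set V := ∑' d, v d
  set u : ℕ → ℕ → ℝ≥0∞ := fun i j => if i < j then μ (A i) * v (j - i) else 0
  have hrow : ∀ i, ∑ j ∈ T, u i j ≤ μ (A i) * V := fun i => by
    rw [← sum_filter, ← mul_sum]
    gcongr
    calc ∑ j ∈ T with i < j, v (j - i) = ∑ d ∈ (T.filter (i < ·)).image (· - i), v d := by
          refine (sum_image fun j hj k hk hjk => ?_).symm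
          simp only [coe_filter, Set.mem_ofPred_eq] at hj hk hjk
          omega
      _ ≤ V := ENNReal.sum_le_tsum _
  have hbound : ∀ i ∈ T, ∀ j ∈ T, μ (A i ∩ A j)
      ≤ μ (A i) * μ (A j) + (if i = j then μ (A i) else 0) + u i j + u j i := by
    intro i hi j hj
    rcases lt_trichotomy i j with hij | rfl | hij
    · simpa [u, hij, hij.ne, hij.not_gt, mul_add] using hpair i hi j hj hij
    · simp [u]
    · simpa [u, hij, hij.ne', hij.not_gt, mul_add, Set.inter_comm, mul_comm]
        using hpair j hj i hi hij
  calc ∑ i ∈ T, ∑ j ∈ T, μ (A i ∩ A j)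
      ≤ ∑ i ∈ T, ∑ j ∈ T,
          (μ (A i) * μ (A j) + (if i = j then μ (A i) else 0) + u i j + u j i) :=
        sum_le_sum fun i hi => sum_le_sum fun j hj => hbound i hi j hj
    _ = (∑ i ∈ T, μ (A i)) ^ 2 + ∑ i ∈ T, μ (A i)
          + ∑ i ∈ T, ∑ j ∈ T, u i j + ∑ i ∈ T, ∑ j ∈ T, u i j := by
        simp only [sum_add_distrib, sum_ite_eq, sq, sum_mul_sum]
        rw [Finset.sum_comm (f := fun i j => u j i)]
        congr 3
        exact sum_congr rfl fun i hi => if_pos hi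
    _ ≤ (∑ i ∈ T, μ (A i)) ^ 2 + ∑ i ∈ T, μ (A i)
          + ∑ i ∈ T, μ (A i) * V + ∑ i ∈ T, μ (A i) * V := by
        gcongr <;> exact hrow _
    _ = (∑ i ∈ T, μ (A i)) ^ 2 + (1 + 2 * V) * ∑ i ∈ T, μ (A i) := by
        rw [← sum_mul]; ring

variable [IsProbabilityMeasure μ] {A : ℕ → Set Ω} {S : Set ℕ} {v : ℕ → ℝ≥0∞}

theorem measure_biUnion_eq_one_of_tsum_eq_top (hA : ∀ n, MeasurableSet (A n))
    (hv : ∑' d, v d ≠ ∞)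
    (hpair : ∀ i ∈ S, ∀ j ∈ S, i < j → μ (A i ∩ A j) ≤ μ (A i) * (μ (A j) + v (j - i)))
    (hdiv : ∑' n : S, μ (A n) = ∞) :
    μ (⋃ n ∈ S, A n) = 1 := by
  set K := 1 + 2 * ∑' d, v d
  have hK : K ≠ ∞ := by simp [K, ENNReal.mul_eq_top, hv]
  refine le_antisymm prob_le_one (ENNReal.le_of_forall_pos_le_add fun ε hε _ => ?_)
  obtain ⟨T, hTS, hT⟩ : ∃ T : Finset ℕ, ↑T ⊆ S ∧ K / ε < ∑ n ∈ T, μ (A n) := by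
    rw [ENNReal.tsum_eq_iSup_sum, iSup_eq_top] at hdiv
    obtain ⟨s, hs⟩ := hdiv (K / ε) (ENNReal.div_lt_top hK (by simpa using hε.ne'))
    refine ⟨s.map (Function.Embedding.subtype _), fun n hn => ?_, by simpa using hs⟩
    obtain ⟨x, -, rfl⟩ := mem_map.mp hn
    exact x.2
  set a := ∑ n ∈ T, μ (A n)
  have ha0 : a ≠ 0 := (lt_of_le_of_lt bot_le hT).ne'
  have ha : a ≠ ∞ := ENNReal.sum_ne_top.mpr fun n _ => measure_ne_top μ _
  have hsub : (⋃ n ∈ T, A n) ⊆ ⋃ n ∈ S, A n := Set.biUnion_subset_biUnion_left hTS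
  have hKa : K * a⁻¹ ≤ ε := by
    rw [← div_eq_mul_inv, ENNReal.div_le_iff ha0 ha, mul_comm]
    exact (ENNReal.div_le_iff (by simpa using hε.ne') ENNReal.coe_ne_top).mp hT.le
  have hcancel : a⁻¹ * a = 1 := ENNReal.inv_mul_cancel ha0 ha
  have key : 1 + 1 ≤ μ (⋃ n ∈ S, A n) + ε + 1 := calc
    1 + 1 = 2 * a⁻¹ * a := by rw [mul_assoc, hcancel]; norm_num
    _ ≤ μ (⋃ n ∈ T, A n) + (a⁻¹) ^ 2 * ∑ i ∈ T, ∑ j ∈ T, μ (A i ∩ A j) :=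
        two_mul_sum_measure_le hA T a⁻¹
    _ ≤ μ (⋃ n ∈ S, A n) + (a⁻¹) ^ 2 * (a ^ 2 + K * a) := by
        gcongr
        exact sum_sum_measure_inter_le v fun i hi j hj => hpair i (hTS hi) j (hTS hj)
    _ = μ (⋃ n ∈ S, A n) + K * a⁻¹ + 1 := by
        rw [show (a⁻¹) ^ 2 * (a ^ 2 + K * a) = (a⁻¹ * a) ^ 2 + K * a⁻¹ * (a⁻¹ * a) by ring,
          hcancel]
        ring
    _ ≤ μ (⋃ n ∈ S, A n) + ε + 1 := by gcongr
  exact (ENNReal.add_le_add_iff_right ENNReal.one_ne_top).mp key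

theorem ae_frequently_mem_of_tsum_eq_top (hA : ∀ n, MeasurableSet (A n))
    (hv : ∑' d, v d ≠ ∞)
    (hpair : ∀ i ∈ S, ∀ j ∈ S, i < j → μ (A i ∩ A j) ≤ μ (A i) * (μ (A j) + v (j - i)))
    (hdiv : ∑' n : S, μ (A n) = ∞) :
    ∀ᵐ ω ∂μ, ∃ᶠ n in atTop, n ∈ S ∧ ω ∈ A n := by
  have htail : ∀ m, ∀ᵐ ω ∂μ, ω ∈ ⋃ n ∈ S ∩ Set.Ici m, A n := fun m => by
    have hU := MeasurableSet.biUnion (Set.to_countable (S ∩ Set.Ici m)) fun n _ => hA n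
    rw [ae_mem_iff_measure_eq hU.nullMeasurableSet, measure_univ]
    exact measure_biUnion_eq_one_of_tsum_eq_top hA hv
      (fun i hi j hj => hpair i hi.1 j hj.1)
      (ENNReal.tsum_inter_Ici_eq_top (fun n => measure_ne_top μ _) hdiv m)
  filter_upwards [ae_all_iff.mpr htail] with ω hω
  refine frequently_atTop.mpr fun m => ?_
  obtain ⟨n, ⟨hnS, hnm⟩, hn⟩ := Set.mem_iUnion₂.mp (hω m)
  exact ⟨n, hnm, hnS, hn⟩

end SecondMoment

section AlternatingProducts

variable {M : Type*} [CommMonoid M] {w : ℕ → M} {r : M}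

theorem prod_range_add_two (hr : ∀ t, w t * w (t + 1) = r) (a n : ℕ) :
    ∏ k ∈ range (n + 2), w (a + k) = r * ∏ k ∈ range n, w (a + 2 + k) := by
  rw [add_comm n 2, prod_range_add, prod_range_succ, prod_range_one, add_zero, hr a]
  simp only [add_assoc]

variable [PartialOrder M] [IsOrderedMonoid M]

theorem prod_range_le_pow_div_two (hw : ∀ t, w t ≤ 1) (hr : ∀ t, w t * w (t + 1) = r) :
    ∀ a n, ∏ k ∈ range n, w (a + k) ≤ r ^ (n / 2)
  | _, 0 => by simp
  | a, 1 => by simpa using hw a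
  | a, n + 2 => by
    rw [prod_range_add_two hr, show (n + 2) / 2 = n / 2 + 1 by omega, pow_succ']
    exact mul_le_mul_right (prod_range_le_pow_div_two hw hr (a + 2) n) r

theorem pow_succ_div_two_le_prod_range (hw : ∀ t, r ≤ w t) (hr : ∀ t, w t * w (t + 1) = r) :
    ∀ a n, r ^ ((n + 1) / 2) ≤ ∏ k ∈ range n, w (a + k)
  | _, 0 => by simp
  | a, 1 => by simpa using hw a
  | a, n + 2 => by
    rw [prod_range_add_two hr, show (n + 2 + 1) / 2 = (n + 1) / 2 + 1 by omega, pow_succ']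
    exact mul_le_mul_right (pow_succ_div_two_le_prod_range hw hr (a + 2) n) r

end AlternatingProducts

section Cylinders

variable {Ω ι β : Type*}

def cylinderEvent (X : ι → Ω → β) (c : ι → β) (S : Finset ι) : Set Ω :=
  {ω | ∀ t ∈ S, X t ω = c t}

variable {X : ι → Ω → β} {c : ι → β}

theorem cylinderEvent_union [DecidableEq ι] (S T : Finset ι) :
    cylinderEvent X c (S ∪ T) = cylinderEvent X c S ∩ cylinderEvent X c T := by
  ext ω
  simp only [cylinderEvent, Set.mem_ofPred_eq, Set.mem_inter_iff, mem_union, or_imp,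
    forall_and]

theorem cylinderEvent_anti {S T : Finset ι} (h : S ⊆ T) :
    cylinderEvent X c T ⊆ cylinderEvent X c S :=
  fun _ hω t ht => hω t (h ht)

variable [MeasurableSpace Ω] {μ : Measure Ω} [MeasurableSpace β] [MeasurableSingletonClass β]

theorem measurableSet_cylinderEvent (hX : ∀ t, Measurable (X t)) (S : Finset ι) :
    MeasurableSet (cylinderEvent X c S) := by
  rw [show cylinderEvent X c S = ⋂ t ∈ S, X t ⁻¹' {c t} by ext; simp [cylinderEvent]]
  exact MeasurableSet.biInter S.countable_toSet fun t _ => hX t (measurableSet_singleton _)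

theorem measure_cylinderEvent (hX : iIndepFun X μ) (S : Finset ι) :
    μ (cylinderEvent X c S) = ∏ t ∈ S, μ {ω | X t ω = c t} := by
  rw [show cylinderEvent X c S = ⋂ t ∈ S, X t ⁻¹' {c t} by ext; simp [cylinderEvent]]
  exact hX.measure_inter_preimage_eq_mul S fun t _ => measurableSet_singleton _

theorem measure_cylinderEvent_inter_of_disjoint [DecidableEq ι] (hX : iIndepFun X μ)
    {S T : Finset ι} (h : Disjoint S T) :
    μ (cylinderEvent X c S ∩ cylinderEvent X c T)
      = μ (cylinderEvent X c S) * μ (cylinderEvent X c T) := by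
  rw [← cylinderEvent_union, measure_cylinderEvent hX, prod_union h, measure_cylinderEvent hX,
    measure_cylinderEvent hX]

end Cylinders

section ParityRuns

variable {Ω : Type*} [MeasurableSpace Ω] {μ : Measure Ω} {X : ℕ → Ω → ℕ} {r : ℝ≥0∞}

def parityRun (X : ℕ → Ω → ℕ) (s e : ℕ) : Set Ω := cylinderEvent X (· % 2) (Ico s e)

theorem measure_parityRun_le [IsProbabilityMeasure μ] (hX : iIndepFun X μ)
    (hr : ∀ t, μ {ω | X t ω = t % 2} * μ {ω | X (t + 1) ω = (t + 1) % 2} = r) (s e : ℕ) :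
    μ (parityRun X s e) ≤ r ^ ((e - s) / 2) := by
  rw [parityRun, measure_cylinderEvent hX, prod_Ico_eq_prod_range]
  exact prod_range_le_pow_div_two (fun _ => prob_le_one) hr s _

theorem pow_le_measure_parityRun (hX : iIndepFun X μ)
    (hr : ∀ t, μ {ω | X t ω = t % 2} * μ {ω | X (t + 1) ω = (t + 1) % 2} = r)
    (hr_le : ∀ t, r ≤ μ {ω | X t ω = t % 2}) (s e : ℕ) :
    r ^ ((e - s + 1) / 2) ≤ μ (parityRun X s e) := by
  rw [parityRun, measure_cylinderEvent hX, prod_Ico_eq_prod_range]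
  exact pow_succ_div_two_le_prod_range hr_le hr s _

theorem measure_parityRun_inter_le [IsProbabilityMeasure μ] (hX : iIndepFun X μ)
    (hr : ∀ t, μ {ω | X t ω = t % 2} * μ {ω | X (t + 1) ω = (t + 1) % 2} = r)
    (s₁ s₂ e₁ e₂ : ℕ) :
    μ (parityRun X s₁ e₁ ∩ parityRun X s₂ e₂)
      ≤ μ (parityRun X s₁ e₁) * (μ (parityRun X s₂ e₂) + r ^ ((e₂ - e₁) / 2)) := by
  rcases le_or_gt e₁ s₂ with hdisj | hover
  · rw [parityRun, parityRun, measure_cylinderEvent_inter_of_disjoint hX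
      ((Ico_disjoint_Ico_consecutive s₁ e₁ e₂).mono_right (Ico_subset_Ico_left hdisj))]
    exact mul_le_mul_right le_self_add _
  · calc μ (parityRun X s₁ e₁ ∩ parityRun X s₂ e₂)
        ≤ μ (parityRun X s₁ e₁ ∩ parityRun X e₁ e₂) := by
          gcongr
          exact cylinderEvent_anti (Ico_subset_Ico_left hover.le)
      _ = μ (parityRun X s₁ e₁) * μ (parityRun X e₁ e₂) :=
          measure_cylinderEvent_inter_of_disjoint hX (Ico_disjoint_Ico_consecutive s₁ e₁ e₂)
      _ ≤ μ (parityRun X s₁ e₁) * (μ (parityRun X s₂ e₂) + r ^ ((e₂ - e₁) / 2)) := by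
          gcongr
          exact (measure_parityRun_le hX hr e₁ e₂).trans le_add_self

end ParityRuns

section Switches

variable {Ω : Type*} {X : ℕ → Ω → ℕ} {ω : Ω}

theorem switchCount_eq_of_parity {n m : ℕ} (h : ∀ t ∈ Ico m (m + n), X t ω = t % 2) :
    switchCount X n m ω = n - 1 := by
  have hterm : ∀ i ∈ Icc (m + 1) (n + m - 1),
      (1 - X (i - 1) ω) * X i ω + X (i - 1) ω * (1 - X i ω) = 1 := fun i hi => by
    rw [mem_Icc] at hi
    rw [h (i - 1) (mem_Ico.mpr (by omega)), h i (mem_Ico.mpr (by omega))]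
    rcases Nat.mod_two_eq_zero_or_one i with hi2 | hi2 <;>
      simp [hi2, show (i - 1) % 2 = 1 - i % 2 by omega]
  rw [switchCount, sum_congr rfl hterm, sum_const, Nat.card_Icc, smul_eq_mul, mul_one]
  omega

theorem sub_one_le_longestSwitch {N m n i : ℕ} (hn : n ∈ Icc 1 N)
    (hi : i ∈ Icc m (m + N - n + 1)) (h : switchCount X n i ω = n - 1) :
    n - 1 ≤ longestSwitch X N m ω :=
  le_sup (f := fun n => n - 1) (by simp only [mem_filter]; exact ⟨hn, i, hi, h⟩)

theorem gamma_sub_one_le_longestSwitch {γ : ℝ} {n : ℕ}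
    (hγ : 0 < γ) (hn : ⌈γ⌉₊ ≤ n) (hω : ω ∈ parityRun X (n + 1 - ⌈γ⌉₊) (n + 1)) :
    γ - 1 ≤ (longestSwitch X n 1 ω : ℝ) := by
  have hL : 1 ≤ ⌈γ⌉₊ := Nat.ceil_pos.mpr hγ
  have hswitch : switchCount X ⌈γ⌉₊ (n + 1 - ⌈γ⌉₊) ω = ⌈γ⌉₊ - 1 :=
    switchCount_eq_of_parity fun t ht =>
      hω t (by rwa [Nat.sub_add_cancel (show ⌈γ⌉₊ ≤ n + 1 by omega)] at ht)
  have hle : ⌈γ⌉₊ - 1 ≤ longestSwitch X n 1 ω :=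
    sub_one_le_longestSwitch (mem_Icc.mpr ⟨hL, hn⟩)
      (mem_Icc.mpr ⟨by omega, by omega⟩) hswitch
  calc γ - 1 ≤ (⌈γ⌉₊ : ℝ) - 1 := by linarith [Nat.le_ceil γ]
    _ = ((⌈γ⌉₊ - 1 : ℕ) : ℝ) := by rw [Nat.cast_sub hL, Nat.cast_one]
    _ ≤ longestSwitch X n 1 ω := by exact_mod_cast hle

end Switches

section Bernoulli

variable {Ω : Type*} [MeasurableSpace Ω] {μ : Measure Ω} {X : ℕ → Ω → ℕ} {p q : ℝ}

theorem measure_setOf_eq_zero_of_measure_setOf_eq_one [IsProbabilityMeasure μ]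
    (hX : ∀ t, Measurable (X t)) (hval : ∀ t ω, X t ω ≤ 1) (hp0 : 0 ≤ p) (hq : q = 1 - p)
    (hdist : ∀ t, μ {ω | X t ω = 1} = ENNReal.ofReal p) (t : ℕ) :
    μ {ω | X t ω = 0} = ENNReal.ofReal q := by
  have hcompl : {ω | X t ω = 0} = {ω | X t ω = 1}ᶜ := by
    ext ω
    simp only [Set.mem_ofPred_eq, Set.mem_compl_iff]
    have := hval t ω
    omega
  have hmeas : MeasurableSet {ω | X t ω = 1} := hX t (measurableSet_singleton 1)
  rw [hcompl, measure_compl hmeas (measure_ne_top μ _), hdist,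
    measure_univ, hq, ENNReal.ofReal_sub 1 hp0, ENNReal.ofReal_one]

theorem measure_parity_mul_measure_parity_succ (hp0 : 0 ≤ p)
    (hdist₀ : ∀ t, μ {ω | X t ω = 0} = ENNReal.ofReal q)
    (hdist₁ : ∀ t, μ {ω | X t ω = 1} = ENNReal.ofReal p) (t : ℕ) :
    μ {ω | X t ω = t % 2} * μ {ω | X (t + 1) ω = (t + 1) % 2} = ENNReal.ofReal (p * q) := by
  rw [ENNReal.ofReal_mul hp0]
  rcases Nat.mod_two_eq_zero_or_one t with ht | ht
  · rw [ht, show (t + 1) % 2 = 1 by omega, hdist₀, hdist₁, mul_comm]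
  · rw [ht, show (t + 1) % 2 = 0 by omega, hdist₀, hdist₁]

theorem ofReal_mul_le_measure_parity (hp0 : 0 ≤ p) (hp1 : p ≤ 1) (hq : q = 1 - p)
    (hdist₀ : ∀ t, μ {ω | X t ω = 0} = ENNReal.ofReal q)
    (hdist₁ : ∀ t, μ {ω | X t ω = 1} = ENNReal.ofReal p) (t : ℕ) :
    ENNReal.ofReal (p * q) ≤ μ {ω | X t ω = t % 2} := by
  have hq0 : 0 ≤ q := by linarith
  rcases Nat.mod_two_eq_zero_or_one t with ht | ht
  · rw [ht, hdist₀]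
    exact ENNReal.ofReal_le_ofReal (mul_le_of_le_one_left hq0 hp1)
  · rw [ht, hdist₁]
    exact ENNReal.ofReal_le_ofReal (mul_le_of_le_one_right hp0 (by linarith))

end Bernoulli

section Divergence

variable {x : ℝ} {γ : ℕ → ℝ}

theorem mul_rpow_le_pow_ceil_succ_div_two (hx0 : 0 < x) (hx1 : x ≤ 1) {y : ℝ} (hy : 0 ≤ y) :
    x * x ^ (y / 2) ≤ x ^ ((⌈y⌉₊ + 1) / 2) := by
  have hceil : ((⌈y⌉₊ + 1) / 2 : ℕ) ≤ 1 + y / 2 := calc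
    (((⌈y⌉₊ + 1) / 2 : ℕ) : ℝ) ≤ ((⌈y⌉₊ + 1 : ℕ) : ℝ) / 2 := Nat.cast_div_le
    _ ≤ 1 + y / 2 := by push_cast; linarith [Nat.ceil_lt_add_one hy]
  rw [← Real.rpow_natCast, ← Real.rpow_one_add' hx0.le (by positivity)]
  exact Real.rpow_le_rpow_of_exponent_ge hx0 hx1 hceil

theorem not_summable_subtype_ceil_le (hx0 : 0 < x) (hx1 : x < 1)
    (hγ : ∀ n, 1 ≤ n → 0 < γ n) (hdiv : ¬Summable fun n => x ^ (γ n / 2)) :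
    ¬Summable fun n : {n | 0 < γ n ∧ ⌈γ n⌉₊ ≤ n} => x ^ (γ n / 2) := by
  set S := {n | 0 < γ n ∧ ⌈γ n⌉₊ ≤ n}
  intro hS
  have hSc : Summable (Sᶜ.indicator fun n => x ^ (γ n / 2)) := by
    refine Summable.of_norm_bounded_eventually_nat
      (summable_geometric_of_lt_one (by positivity) (Real.rpow_lt_one hx0.le hx1 one_half_pos)) ?_
    filter_upwards [eventually_ge_atTop 1] with n hn
    by_cases hnS : n ∈ S
    · simp only [Set.indicator_of_notMem (Set.notMem_compl_iff.mpr hnS), norm_zero]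
      positivity
    · rw [Set.indicator_of_mem hnS, Real.norm_of_nonneg (by positivity)]
      have hγn : (n : ℝ) < γ n :=
        Nat.lt_ceil.mp (not_le.mp fun h => hnS ⟨hγ n hn, h⟩)
      calc x ^ (γ n / 2) ≤ x ^ ((n : ℝ) / 2) :=
            Real.rpow_le_rpow_of_exponent_ge hx0 hx1.le (by linarith)
        _ = (x ^ (1 / 2 : ℝ)) ^ n := by
            rw [← Real.rpow_natCast, ← Real.rpow_mul hx0.le]
            ring_nf
  apply hdiv
  rw [← Set.indicator_self_add_compl S fun n => x ^ (γ n / 2)]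
  exact (summable_subtype_iff_indicator.mp hS).add hSc

end Divergence

theorem tsum_measure_parityRun_eq_top {Ω : Type*} [MeasurableSpace Ω] {μ : Measure Ω}
    {X : ℕ → Ω → ℕ} (hX : iIndepFun X μ) {x : ℝ} (hx0 : 0 < x) (hx1 : x < 1)
    (hr : ∀ t, μ {ω | X t ω = t % 2} * μ {ω | X (t + 1) ω = (t + 1) % 2} = ENNReal.ofReal x)
    (hr_le : ∀ t, ENNReal.ofReal x ≤ μ {ω | X t ω = t % 2})
    {γ : ℕ → ℝ} (hγ : ∀ n, 1 ≤ n → 0 < γ n) (hdiv : ¬Summable fun n => x ^ (γ n / 2)) :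
    ∑' n : {n | 0 < γ n ∧ ⌈γ n⌉₊ ≤ n}, μ (parityRun X (n + 1 - ⌈γ n⌉₊) (n + 1)) = ∞ := by
  have hsum : ∑' n : {n | 0 < γ n ∧ ⌈γ n⌉₊ ≤ n}, ENNReal.ofReal (x * x ^ (γ n / 2)) = ∞ :=
    ENNReal.tsum_ofReal_eq_top (fun n => by positivity)
      (mt (summable_mul_left_iff hx0.ne').mp (not_summable_subtype_ceil_le hx0 hx1 hγ hdiv))
  refine top_le_iff.mp (hsum.symm.trans_le (ENNReal.tsum_le_tsum fun ⟨n, hγn, hn⟩ => ?_))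
  calc ENNReal.ofReal (x * x ^ (γ n / 2)) ≤ ENNReal.ofReal x ^ ((⌈γ n⌉₊ + 1) / 2) := by
        rw [← ENNReal.ofReal_pow hx0.le]
        exact ENNReal.ofReal_le_ofReal (mul_rpow_le_pow_ceil_succ_div_two hx0 hx1.le hγn.le)
    _ ≤ μ (parityRun X (n + 1 - ⌈γ n⌉₊) (n + 1)) := by
        simpa [Nat.sub_sub_self (show ⌈γ n⌉₊ ≤ n + 1 by omega)]
          using pow_le_measure_parityRun hX hr hr_le (n + 1 - ⌈γ n⌉₊) (n + 1)

theorem longestSwitch_ge_gamma_infinitely_often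
    {Ω : Type*} [MeasurableSpace Ω] (μ : Measure Ω) [IsProbabilityMeasure μ]
    (p q : ℝ) (hp0 : 0 < p) (hp1 : p < 1) (hq : q = 1 - p)
    (X : ℕ → Ω → ℕ)
    (hmeas : ∀ i, Measurable (X i))
    (hval : ∀ i ω, X i ω ≤ 1)
    (hdist : ∀ i, μ {ω | X i ω = 1} = ENNReal.ofReal p)
    (hindep : iIndepFun X μ)
    (γ : ℕ → ℝ) (hγ : ∀ n : ℕ, 1 ≤ n → 0 < γ n)
    (hdiv : ¬ Summable fun n : ℕ => (p * q) ^ (γ (n + 1) / 2)) :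
    ∀ᵐ ω ∂μ, ∃ Ns : ℕ → ℕ, StrictMono Ns ∧ (∀ i : ℕ, 1 ≤ Ns i) ∧ ∀ i : ℕ,
      γ (Ns i) - 1 ≤ (longestSwitch X (Ns i) 1 ω : ℝ) := by
  have hpq0 : 0 < p * q := mul_pos hp0 (by linarith)
  have hpq1 : p * q < 1 := by nlinarith
  have hdist₀ := measure_setOf_eq_zero_of_measure_setOf_eq_one hmeas hval hp0.le hq hdist
  have hr := measure_parity_mul_measure_parity_succ hp0.le hdist₀ hdist
  have hr_le := ofReal_mul_le_measure_parity hp0.le hp1.le hq hdist₀ hdist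
  have hfreq : ∀ᵐ ω ∂μ, ∃ᶠ n in atTop, n ∈ {n | 0 < γ n ∧ ⌈γ n⌉₊ ≤ n} ∧
      ω ∈ parityRun X (n + 1 - ⌈γ n⌉₊) (n + 1) :=
    ae_frequently_mem_of_tsum_eq_top (fun n => measurableSet_cylinderEvent hmeas _)
      (ENNReal.tsum_pow_div_two_ne_top (ENNReal.ofReal_lt_one.mpr hpq1))
      (fun i _ j _ _ => by
        simpa using measure_parityRun_inter_le hindep hr (i + 1 - ⌈γ i⌉₊) (j + 1 - ⌈γ j⌉₊)
          (i + 1) (j + 1))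
      (tsum_measure_parityRun_eq_top hindep hpq0 hpq1 hr hr_le hγ
        (mt (summable_nat_add_iff 1).mpr hdiv))
  filter_upwards [hfreq] with ω hω
  obtain ⟨Ns, hmono, hNs⟩ := extraction_of_frequently_atTop
    (P := fun n => 1 ≤ n ∧ γ n - 1 ≤ (longestSwitch X n 1 ω : ℝ))
    (hω.mono fun n ⟨⟨hγn, hn⟩, hωn⟩ =>
      ⟨(Nat.ceil_pos.mpr hγn).trans_le hn, gamma_sub_one_le_longestSwitch hγn hn hωn⟩)
  exact ⟨Ns, hmono, fun i => (hNs i).1, fun i => (hNs i).2⟩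
end

section
/- Let (Ω, F, P) be a probability space and A_1, A_2, … arbitrary events satisfying ∑_{n=1}^∞ P(A_n) = ∞ and liminf_{n→∞} [ ∑_{1≤k<l≤n} P(A_k ∩ A_l) ] / [ ∑_{1≤k<l≤n} P(A_k) P(A_l) ] = 1. Then P(limsup_{n→∞} A_n) = 1, i.e., with probability one infinitely many of the events A_n occur. -/
/-! With `N = ∑_{k ∈ s} 𝟙_{A_k}`, Cauchy–Schwarz applied to `N = N · 𝟙_{N > 0}` gives the
Chung–Erdős inequality `(∑ P(A_k))² ≤ P(⋃ A_k) · ∑_{k,l} P(A_k ∩ A_l)`. Apply it to the block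
`m < k ≤ n` and write `S_n = ∑_{k ≤ n} P(A_k)`: the double sum is at most
`S_n + 2 ∑_{k<l≤n} P(A_k ∩ A_l)`, and along the `n` witnessing the liminf the pair sum is at most
`(1 + δ) ∑_{k<l≤n} P(A_k) P(A_l) ≤ (1 + δ) S_n² / 2`. Since `S_n → ∞`, dividing by `S_n²` gives
`1 ≤ (1 + δ) P(⋃_{k ≥ m} A_k)` for every `δ > 0` and `m`, so every tail union, and hence
`limsup A_n`, has probability one. -/

open MeasureTheory Filter Finset
open scoped ENNReal

theorem sum_Icc_sum_Icc_eq_sum_add_two_mul_sum_Ico {R : Type*} [Semiring R] (f : ℕ → ℕ → R)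
    (hf : ∀ k l, f k l = f l k) (n : ℕ) :
    ∑ k ∈ Icc 1 n, ∑ l ∈ Icc 1 n, f k l
      = ∑ k ∈ Icc 1 n, f k k + 2 * ∑ l ∈ Icc 1 n, ∑ k ∈ Ico 1 l, f k l := by
  induction n with
  | zero => simp
  | succ n ih =>
    simp only [sum_Icc_succ_top (Nat.le_add_left 1 n), sum_add_distrib, ih]
    rw [← Ico_add_one_right_eq_Icc]
    simp only [hf (n + 1), two_mul]
    abel

theorem two_mul_sum_Icc_sum_Ico_mul_le_sq (x : ℕ → ℝ) (n : ℕ) :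
    2 * ∑ l ∈ Icc 1 n, ∑ k ∈ Ico 1 l, x k * x l ≤ (∑ k ∈ Icc 1 n, x k) ^ 2 := by
  rw [sq, sum_mul_sum, sum_Icc_sum_Icc_eq_sum_add_two_mul_sum_Ico _ fun k l => mul_comm _ _]
  have : 0 ≤ ∑ k ∈ Icc 1 n, x k * x k := sum_nonneg fun k _ => mul_self_nonneg _
  linarith

theorem Real.isBoundedUnder_ge_of_liminf_ne_zero {α : Type*} {l : Filter α} {u : α → ℝ}
    (h : liminf u l ≠ 0) : IsBoundedUnder (· ≥ ·) l u := by
  by_contra hu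
  have : {a | ∀ᶠ n in l, a ≤ u n} = ∅ := Set.eq_empty_of_forall_notMem fun a ha => hu ⟨a, ha⟩
  exact h (by rw [liminf_eq, this, Real.sSup_empty])

theorem Real.isCoboundedUnder_ge_of_liminf_ne_zero {α : Type*} {l : Filter α} {u : α → ℝ}
    (h : liminf u l ≠ 0) : IsCoboundedUnder (· ≥ ·) l u := by
  by_contra hu
  exact h (Real.sSup_of_not_bddAbove fun ⟨b, hb⟩ => hu ⟨b, fun a ha => hb ha⟩)

theorem frequently_le_mul_of_liminf_div_eq_one {α : Type*} {l : Filter α} {a c : α → ℝ}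
    (hc : ∀ n, 0 ≤ c n) (h : liminf (fun n => a n / c n) l = 1) {r : ℝ} (hr : 1 < r) :
    ∃ᶠ n in l, a n ≤ r * c n := by
  have h0 : liminf (fun n => a n / c n) l ≠ 0 := by simp [h]
  have hpos := eventually_lt_of_lt_liminf (h ▸ zero_lt_one)
    (Real.isBoundedUnder_ge_of_liminf_ne_zero h0)
  have hlt := frequently_lt_of_liminf_lt (Real.isCoboundedUnder_ge_of_liminf_ne_zero h0) (h ▸ hr)
  refine (hlt.and_eventually hpos).mono fun n ⟨hlt, hpos⟩ => ?_
  -- `a n / c n > 0` rules out the junk value `a n / 0 = 0`.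
  have hcn : 0 < c n := (hc n).lt_of_ne fun h0 => by simp [← h0] at hpos
  exact ((div_lt_iff₀ hcn).1 hlt).le

theorem Real.one_le_of_frequently_sq_sub_le {C t s : ℝ}
    (h : ∃ᶠ y in atTop, (y - C) ^ 2 ≤ t * y + s * y ^ 2) : 1 ≤ s := by
  by_contra! hs
  obtain ⟨y, hy, hyC⟩ :=
    (h.and_eventually (eventually_ge_atTop ((|2 * C + t| + 1) / (1 - s)))).exists
  have : |2 * C + t| + 1 ≤ (1 - s) * y := by rwa [div_le_iff₀' (by linarith)] at hyC
  nlinarith [le_abs_self (2 * C + t), abs_nonneg (2 * C + t), sq_nonneg C]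

theorem ENNReal.sq_lintegral_mul_le {α : Type*} [MeasurableSpace α] (μ : Measure α)
    {f g : α → ℝ≥0∞} (hf : AEMeasurable f μ) (hg : AEMeasurable g μ) :
    (∫⁻ a, f a * g a ∂μ) ^ 2 ≤ (∫⁻ a, f a ^ 2 ∂μ) * ∫⁻ a, g a ^ 2 ∂μ := by
  have h := ENNReal.lintegral_mul_le_Lp_mul_Lq μ .two_two hf hg
  simp only [ENNReal.rpow_two, Pi.mul_apply] at h
  rwa [← ENNReal.mul_rpow_of_nonneg _ _ (by norm_num), one_div,
    ENNReal.le_rpow_inv_iff (by norm_num), ENNReal.rpow_two] at h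

section

variable {Ω : Type*} [MeasurableSpace Ω] {μ : Measure Ω}

theorem lintegral_sum_indicator_one {ι : Type*} {B : ι → Set Ω} (hB : ∀ i, MeasurableSet (B i))
    (s : Finset ι) : ∫⁻ a, ∑ i ∈ s, (B i).indicator 1 a ∂μ = ∑ i ∈ s, μ (B i) := by
  rw [lintegral_finsetSum' _ fun i _ => (measurable_one.indicator (hB i)).aemeasurable]
  exact sum_congr rfl fun i _ => lintegral_indicator_one (hB i)

theorem sq_sum_measure_le_measure_biUnion_mul_sum_sum_measure_inter {ι : Type*} {A : ι → Set Ω}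
    (hA : ∀ i, MeasurableSet (A i)) (s : Finset ι) :
    (∑ i ∈ s, μ (A i)) ^ 2 ≤ μ (⋃ i ∈ s, A i) * ∑ i ∈ s, ∑ j ∈ s, μ (A i ∩ A j) := by
  set U := ⋃ i ∈ s, A i
  set N : Ω → ℝ≥0∞ := fun a => ∑ i ∈ s, (A i).indicator 1 a
  have hU : MeasurableSet U := s.measurableSet_biUnion fun i _ => hA i
  have hUN : ∀ a, U.indicator 1 a * N a = N a := by
    intro a
    by_cases ha : a ∈ U
    · simp [ha]
    · simp only [U, Set.mem_iUnion, not_exists] at ha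
      simp [N, sum_eq_zero fun i hi => Set.indicator_of_notMem (ha i hi) 1]
  have hN_sq : ∫⁻ a, N a ^ 2 ∂μ = ∑ i ∈ s, ∑ j ∈ s, μ (A i ∩ A j) := by
    have hsq : ∀ a, N a ^ 2 = ∑ i ∈ s, ∑ j ∈ s, (A i ∩ A j).indicator 1 a := fun a => by
      simp [N, sq, sum_mul_sum, Set.inter_indicator_one]
    simp_rw [hsq]
    rw [lintegral_finsetSum' _ fun i _ => (Finset.measurable_sum _ fun j _ =>
      measurable_one.indicator ((hA i).inter (hA j))).aemeasurable]
    exact sum_congr rfl fun i _ => lintegral_sum_indicator_one (fun j => (hA i).inter (hA j)) s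
  have hU_sq : ∫⁻ a, U.indicator 1 a ^ 2 ∂μ = μ U := by
    have : ∀ a, U.indicator (1 : Ω → ℝ≥0∞) a ^ 2 = U.indicator 1 a := fun a => by
      by_cases ha : a ∈ U <;> simp [ha]
    simp_rw [this]
    exact lintegral_indicator_one hU
  have h := ENNReal.sq_lintegral_mul_le μ (measurable_one.indicator hU).aemeasurable
    (Finset.measurable_sum s fun i _ => measurable_one.indicator (hA i)).aemeasurable
  rwa [lintegral_congr hUN, lintegral_sum_indicator_one hA, hN_sq, hU_sq] at h

theorem sq_sum_measureReal_le_measureReal_biUnion_mul_sum_sum_measureReal_inter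
    [IsFiniteMeasure μ] {ι : Type*} {A : ι → Set Ω} (hA : ∀ i, MeasurableSet (A i))
    (s : Finset ι) :
    (∑ i ∈ s, μ.real (A i)) ^ 2
      ≤ μ.real (⋃ i ∈ s, A i) * ∑ i ∈ s, ∑ j ∈ s, μ.real (A i ∩ A j) := by
  have h := ENNReal.toReal_mono (by simp [ENNReal.mul_eq_top, ENNReal.sum_eq_top])
    (sq_sum_measure_le_measure_biUnion_mul_sum_sum_measure_inter (μ := μ) hA s)
  simpa [ENNReal.toReal_sum, measureReal_def] using h

variable {A : ℕ → Set Ω}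

theorem sq_sub_sum_Icc_measureReal_le [IsFiniteMeasure μ] (hA : ∀ n, MeasurableSet (A n))
    {m n : ℕ} (hmn : m ≤ n) :
    (∑ k ∈ Icc 1 n, μ.real (A k) - ∑ k ∈ Icc 1 m, μ.real (A k)) ^ 2
      ≤ μ.real (⋃ k ≥ m, A k)
        * (∑ k ∈ Icc 1 n, μ.real (A k) + 2 * ∑ l ∈ Icc 1 n, ∑ k ∈ Ico 1 l, μ.real (A k ∩ A l)) := by
  have hIoc : ∑ k ∈ Icc 1 n, μ.real (A k) - ∑ k ∈ Icc 1 m, μ.real (A k)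
      = ∑ k ∈ Ioc m n, μ.real (A k) := by
    have hIcc : ∀ j, Icc 1 j = Ioc 0 j := fun j => Icc_add_one_left_eq_Ioc 0 j
    rw [hIcc, hIcc, ← sum_Ioc_consecutive _ (Nat.zero_le m) hmn, add_sub_cancel_left]
  have hpairs : ∑ k ∈ Icc 1 n, μ.real (A k) + 2 * ∑ l ∈ Icc 1 n, ∑ k ∈ Ico 1 l, μ.real (A k ∩ A l)
      = ∑ k ∈ Icc 1 n, ∑ l ∈ Icc 1 n, μ.real (A k ∩ A l) := by
    rw [sum_Icc_sum_Icc_eq_sum_add_two_mul_sum_Ico _ fun k l => by rw [Set.inter_comm]]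
    simp only [Set.inter_self]
  have hsub : Ioc m n ⊆ Icc 1 n := fun k hk => by simp only [mem_Ioc, mem_Icc] at hk ⊢; omega
  rw [hIoc, hpairs]
  calc _ ≤ μ.real (⋃ k ∈ Ioc m n, A k) * ∑ k ∈ Ioc m n, ∑ l ∈ Ioc m n, μ.real (A k ∩ A l) :=
        sq_sum_measureReal_le_measureReal_biUnion_mul_sum_sum_measureReal_inter hA _
    _ ≤ _ := by
      refine mul_le_mul (measureReal_mono (Set.iUnion₂_subset fun k hk => ?_) (measure_ne_top _ _))
        ((sum_le_sum fun k _ => sum_le_sum_of_subset_of_nonneg hsub fun l _ _ =>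
            measureReal_nonneg).trans
          (sum_le_sum_of_subset_of_nonneg hsub fun k _ _ => sum_nonneg fun l _ =>
            measureReal_nonneg))
        (by positivity) measureReal_nonneg
      exact Set.subset_iUnion₂ (s := fun k (_ : k ≥ m) => A k) k (mem_Ioc.1 hk).1.le

theorem tendsto_sum_Icc_measureReal_atTop [IsFiniteMeasure μ] (h : ∑' n, μ (A (n + 1)) = ∞) :
    Tendsto (fun n => ∑ k ∈ Icc 1 n, μ.real (A k)) atTop atTop := by
  rw [← ENNReal.tendsto_ofReal_nhds_top, ← h]
  convert ENNReal.tendsto_nat_tsum fun n => μ (A (n + 1)) using 2 with n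
  rw [ENNReal.ofReal_sum_of_nonneg fun k _ => measureReal_nonneg]
  simp only [measureReal_def, ENNReal.ofReal_toReal (measure_ne_top μ _)]
  rw [range_eq_Ico, sum_Ico_add' (fun k => μ (A k)), zero_add, Ico_add_one_right_eq_Icc]

theorem measure_limsup_eq_one_of_measure_iUnion_ge [IsProbabilityMeasure μ]
    (hA : ∀ n, MeasurableSet (A n)) (h : ∀ m, μ (⋃ k ≥ m, A k) = 1) :
    μ (limsup A atTop) = 1 := by
  rw [← mem_ae_iff_prob_eq_one (MeasurableSet.measurableSet_limsup hA),
    limsup_eq_iInf_iSup_of_nat]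
  simp only [Set.iInf_eq_iInter, Set.iSup_eq_iUnion]
  exact countable_iInter_mem.2 fun m =>
    (mem_ae_iff_prob_eq_one (MeasurableSet.biUnion (Set.to_countable _) fun k _ => hA k)).2 (h m)

theorem measure_iUnion_ge_eq_one_of_frequently_sum_inter_le [IsProbabilityMeasure μ]
    (hA : ∀ n, MeasurableSet (A n))
    (hS : Tendsto (fun n => ∑ k ∈ Icc 1 n, μ.real (A k)) atTop atTop)
    (hpairs : ∀ r > 1, ∃ᶠ n in atTop,
      ∑ l ∈ Icc 1 n, ∑ k ∈ Ico 1 l, μ.real (A k ∩ A l)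
        ≤ r * ∑ l ∈ Icc 1 n, ∑ k ∈ Ico 1 l, μ.real (A k) * μ.real (A l))
    (m : ℕ) : μ (⋃ k ≥ m, A k) = 1 := by
  set t := μ.real (⋃ k ≥ m, A k)
  have ht0 : 0 ≤ t := measureReal_nonneg
  have ht1 : t ≤ 1 := measureReal_le_one
  suffices 1 ≤ t from ENNReal.toReal_eq_one_iff _ |>.1 (le_antisymm ht1 this)
  refine le_of_forall_pos_le_add fun δ hδ => ?_
  have hfreq : ∃ᶠ n in atTop,
      (∑ k ∈ Icc 1 n, μ.real (A k) - ∑ k ∈ Icc 1 m, μ.real (A k)) ^ 2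
        ≤ t * ∑ k ∈ Icc 1 n, μ.real (A k) + t * (1 + δ) * (∑ k ∈ Icc 1 n, μ.real (A k)) ^ 2 := by
    refine ((hpairs (1 + δ) (by linarith)).and_eventually (eventually_ge_atTop m)).mono
      fun n ⟨hle, hmn⟩ => (sq_sub_sum_Icc_measureReal_le hA hmn).trans ?_
    have hsq := two_mul_sum_Icc_sum_Ico_mul_le_sq (fun k => μ.real (A k)) n
    have : 2 * ∑ l ∈ Icc 1 n, ∑ k ∈ Ico 1 l, μ.real (A k ∩ A l)
        ≤ (1 + δ) * (∑ k ∈ Icc 1 n, μ.real (A k)) ^ 2 := by nlinarith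
    nlinarith [mul_le_mul_of_nonneg_left this ht0]
  have := Real.one_le_of_frequently_sq_sub_le (hS.frequently hfreq)
  nlinarith

end

theorem borel_cantelli_kochen_stone
    {Ω : Type*} [MeasurableSpace Ω] (μ : Measure Ω) [IsProbabilityMeasure μ]
    (A : ℕ → Set Ω) (hA : ∀ n, MeasurableSet (A n))
    (hsum : (∑' n : ℕ, μ (A (n + 1))) = ⊤)
    (hratio : atTop.liminf
        (fun n : ℕ =>
          (∑ l ∈ Finset.Icc 1 n, ∑ k ∈ Finset.Ico 1 l, (μ (A k ∩ A l)).toReal) /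
          (∑ l ∈ Finset.Icc 1 n, ∑ k ∈ Finset.Ico 1 l, (μ (A k)).toReal * (μ (A l)).toReal))
      = 1) :
    μ (Filter.limsup A atTop) = 1 := by
  have hpairs_nonneg (n : ℕ) :
      0 ≤ ∑ l ∈ Icc 1 n, ∑ k ∈ Ico 1 l, μ.real (A k) * μ.real (A l) :=
    sum_nonneg fun l _ => sum_nonneg fun k _ => mul_nonneg measureReal_nonneg measureReal_nonneg
  exact measure_limsup_eq_one_of_measure_iUnion_ge hA
    (measure_iUnion_ge_eq_one_of_frequently_sum_inter_le hA (tendsto_sum_Icc_measureReal_atTop hsum)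
      fun r hr => frequently_le_mul_of_liminf_div_eq_one hpairs_nonneg hratio hr)
end

section
/- Let N, u ∈ ℕ with 2 ≤ u ≤ N. Then P( ∪_{k=1}^{N−u+1} { S_u^{(k)} = u−1 } ) ≤ 2N (pq)^{⌊u/2⌋}; i.e., the probability that some window of u consecutive trials among X_1,…,X_N is fully alternating is at most 2N(pq)^{⌊u/2⌋}. -/
open MeasureTheory ProbabilityTheory Filter
open scoped Classical

/-!
A window of `u` trials with `u - 1` switches is determined by its first value, so its first
`2 ⌊u/2⌋` trials follow one of the two alternating patterns `0101…` and `1010…`. By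
independence each pattern has probability `(pq)^⌊u/2⌋`, and a union bound over the at most
`N` windows gives the claim.
-/

open Finset
open scoped ENNReal

lemma switch_summand_le_one {a b : ℕ} (ha : a ≤ 1) (hb : b ≤ 1) :
    (1 - a) * b + a * (1 - b) ≤ 1 := by
  interval_cases a <;> interval_cases b <;> simp

lemma switch_summand_eq_one_iff {a b : ℕ} (ha : a ≤ 1) (hb : b ≤ 1) :
    (1 - a) * b + a * (1 - b) = 1 ↔ a ≠ b := by
  interval_cases a <;> interval_cases b <;> simp

lemma eq_add_mod_two_of_ne_succ {b : ℕ → ℕ} {n : ℕ} (hb : ∀ j, b j ≤ 1)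
    (hne : ∀ j, j + 1 < n → b j ≠ b (j + 1)) : ∀ j < n, b j = (b 0 + j) % 2 := by
  intro j
  induction j with
  | zero => intro _; have := hb 0; omega
  | succ j ih =>
    intro hj
    have := ih (by omega)
    have := hne j hj
    have := hb j
    have := hb (j + 1)
    omega

lemma prod_range_two_mul_ite_mod_two {M : Type*} [CommMonoid M] (P Q : M) (a m : ℕ) :
    ∏ j ∈ range (2 * m), (if (a + j) % 2 = 1 then P else Q) = (P * Q) ^ m := by
  induction m with
  | zero => simp
  | succ m ih =>
    rw [show 2 * (m + 1) = 2 * m + 1 + 1 by ring, prod_range_succ, prod_range_succ, ih,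
      pow_succ, mul_assoc]
    rcases Nat.mod_two_eq_zero_or_one a with ha | ha
    · rw [if_neg (by omega), if_pos (by omega), mul_comm Q]
    · rw [if_pos (by omega), if_neg (by omega)]

section

variable {Ω : Type*} {X : ℕ → Ω → ℕ}

def alternatingEvent (X : ℕ → Ω → ℕ) (k n a : ℕ) : Set Ω :=
  ⋂ j ∈ range n, X (k + j) ⁻¹' {(a + j) % 2}

lemma alternatingEvent_anti {k n n' : ℕ} (a : ℕ) (h : n' ≤ n) :
    alternatingEvent X k n a ⊆ alternatingEvent X k n' a :=
  Set.biInter_subset_biInter_left (range_subset_range.mpr h)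

lemma ne_succ_of_switchCount_eq_pred (hval : ∀ i ω, X i ω ≤ 1) {n k j : ℕ} {ω : Ω}
    (h : switchCount X n k ω = n - 1) (hj : j + 1 < n) :
    X (k + j) ω ≠ X (k + j + 1) ω := by
  have hcard : #(Icc (k + 1) (n + k - 1)) = n - 1 := by
    rw [Nat.card_Icc]; omega
  have hall : ∀ i ∈ Icc (k + 1) (n + k - 1),
      (1 - X (i - 1) ω) * X i ω + X (i - 1) ω * (1 - X i ω) = 1 := by
    refine (sum_eq_sum_iff_of_le fun i _ => switch_summand_le_one (hval _ ω) (hval i ω)).mp ?_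
    rw [sum_const, hcard, smul_eq_mul, mul_one]
    exact h
  have := hall (k + j + 1) (mem_Icc.mpr ⟨by omega, by omega⟩)
  rwa [Nat.add_sub_cancel, switch_summand_eq_one_iff (hval _ ω) (hval _ ω)] at this

lemma mem_alternatingEvent_of_switchCount_eq_pred (hval : ∀ i ω, X i ω ≤ 1) {n k : ℕ}
    {ω : Ω} (h : switchCount X n k ω = n - 1) : ω ∈ alternatingEvent X k n (X k ω) := by
  have halt := eq_add_mod_two_of_ne_succ (b := fun j => X (k + j) ω) (fun _ => hval _ ω)
    fun _ hj => ne_succ_of_switchCount_eq_pred hval h hj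
  simp only [alternatingEvent, Set.mem_iInter, mem_range]
  exact fun j hj => halt j hj

lemma switchCount_eq_pred_subset (hval : ∀ i ω, X i ω ≤ 1) (n k : ℕ) :
    {ω | switchCount X n k ω = n - 1} ⊆ alternatingEvent X k n 0 ∪ alternatingEvent X k n 1 := by
  intro ω h
  have hmem := mem_alternatingEvent_of_switchCount_eq_pred hval h
  rcases Nat.le_one_iff_eq_zero_or_eq_one.mp (hval k ω) with h0 | h1
  · exact Or.inl (h0 ▸ hmem)
  · exact Or.inr (h1 ▸ hmem)

variable [MeasurableSpace Ω] {μ : Measure Ω}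

lemma measure_preimage_zero_eq_one_sub [IsProbabilityMeasure μ] {Y : Ω → ℕ}
    (hY : Measurable Y) (hval : ∀ ω, Y ω ≤ 1) : μ (Y ⁻¹' {0}) = 1 - μ (Y ⁻¹' {1}) := by
  have hcompl : Y ⁻¹' {0} = (Y ⁻¹' {1})ᶜ := by
    ext ω
    have := hval ω
    simp only [Set.mem_preimage, Set.mem_singleton_iff, Set.mem_compl_iff]
    omega
  rw [hcompl, prob_compl_eq_one_sub (hY (measurableSet_singleton 1))]

lemma measure_alternatingEvent (hindep : iIndepFun X μ) {P Q : ℝ≥0∞}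
    (h1 : ∀ i, μ (X i ⁻¹' {1}) = P) (h0 : ∀ i, μ (X i ⁻¹' {0}) = Q) (k a m : ℕ) :
    μ (alternatingEvent X k (2 * m) a) = (P * Q) ^ m := by
  rw [alternatingEvent, (hindep.precomp (add_right_injective k)).meas_biInter
    fun j _ => ⟨{(a + j) % 2}, measurableSet_singleton _, rfl⟩,
    ← prod_range_two_mul_ite_mod_two P Q a m]
  refine prod_congr rfl fun j _ => ?_
  rcases Nat.mod_two_eq_zero_or_one (a + j) with h | h <;> simp [h, h0, h1]

lemma measure_switchCount_eq_pred_le (hval : ∀ i ω, X i ω ≤ 1) (hindep : iIndepFun X μ)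
    {P Q : ℝ≥0∞} (h1 : ∀ i, μ (X i ⁻¹' {1}) = P) (h0 : ∀ i, μ (X i ⁻¹' {0}) = Q) (n k : ℕ) :
    μ {ω | switchCount X n k ω = n - 1} ≤ 2 * (P * Q) ^ (n / 2) := by
  have hsub : {ω | switchCount X n k ω = n - 1} ⊆
      alternatingEvent X k (2 * (n / 2)) 0 ∪ alternatingEvent X k (2 * (n / 2)) 1 :=
    (switchCount_eq_pred_subset hval n k).trans <| Set.union_subset_union
      (alternatingEvent_anti 0 (Nat.mul_div_le n 2)) (alternatingEvent_anti 1 (Nat.mul_div_le n 2))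
  calc μ {ω | switchCount X n k ω = n - 1}
      ≤ μ (alternatingEvent X k (2 * (n / 2)) 0) + μ (alternatingEvent X k (2 * (n / 2)) 1) :=
        (measure_mono hsub).trans (measure_union_le _ _)
    _ = 2 * (P * Q) ^ (n / 2) := by
        rw [measure_alternatingEvent hindep h1 h0, measure_alternatingEvent hindep h1 h0, two_mul]

lemma measure_exists_window_le {A : ℕ → Set Ω} {c : ℝ≥0∞} (hA : ∀ k, μ (A k) ≤ c) (K : ℕ) :
    μ {ω | ∃ k, 1 ≤ k ∧ k ≤ K ∧ ω ∈ A k} ≤ K * c := by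
  have hunion : {ω | ∃ k, 1 ≤ k ∧ k ≤ K ∧ ω ∈ A k} = ⋃ k ∈ Icc 1 K, A k := by
    ext ω
    simp only [Set.mem_ofPred_eq, Set.mem_iUnion, mem_Icc, exists_prop, and_assoc]
  calc μ {ω | ∃ k, 1 ≤ k ∧ k ≤ K ∧ ω ∈ A k} ≤ ∑ k ∈ Icc 1 K, μ (A k) :=
        hunion ▸ measure_biUnion_finset_le _ _
    _ ≤ #(Icc 1 K) • c := sum_le_card_nsmul _ _ _ fun k _ => hA k
    _ = K * c := by rw [Nat.card_Icc, Nat.add_sub_cancel, nsmul_eq_mul]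

end

theorem prob_exists_alternating_window_le
    {Ω : Type*} [MeasurableSpace Ω] (μ : Measure Ω) [IsProbabilityMeasure μ]
    (p q : ℝ) (hp0 : 0 < p) (hp1 : p < 1) (hq : q = 1 - p)
    (X : ℕ → Ω → ℕ)
    (hmeas : ∀ i, Measurable (X i))
    (hval : ∀ i ω, X i ω ≤ 1)
    (hdist : ∀ i, μ {ω | X i ω = 1} = ENNReal.ofReal p)
    (hindep : iIndepFun X μ)
    (N u : ℕ) (hu : 2 ≤ u) (huN : u ≤ N) :
    (μ {ω | ∃ k : ℕ, 1 ≤ k ∧ k ≤ N - u + 1 ∧ switchCount X u k ω = u - 1}).toReal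
      ≤ 2 * N * (p * q) ^ (u / 2) := by
  have hq0 : 0 ≤ q := by linarith
  have h1 : ∀ i, μ (X i ⁻¹' {1}) = ENNReal.ofReal p := hdist
  have h0 : ∀ i, μ (X i ⁻¹' {0}) = ENNReal.ofReal q := fun i => by
    rw [measure_preimage_zero_eq_one_sub (hmeas i) (hval i), h1, hq,
      ENNReal.ofReal_sub _ hp0.le, ENNReal.ofReal_one]
  have hbound : μ {ω | ∃ k : ℕ, 1 ≤ k ∧ k ≤ N - u + 1 ∧ switchCount X u k ω = u - 1}
      ≤ N * (2 * (ENNReal.ofReal p * ENNReal.ofReal q) ^ (u / 2)) :=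
    calc _ ≤ ((N - u + 1 : ℕ) : ℝ≥0∞) * (2 * (ENNReal.ofReal p * ENNReal.ofReal q) ^ (u / 2)) :=
          measure_exists_window_le (measure_switchCount_eq_pred_le hval hindep h1 h0 u) _
      _ ≤ _ := by gcongr; omega
  calc _ ≤ (N * (2 * (ENNReal.ofReal p * ENNReal.ofReal q) ^ (u / 2))).toReal :=
        ENNReal.toReal_mono (by finiteness) hbound
    _ = 2 * N * (p * q) ^ (u / 2) := by
        simp only [ENNReal.toReal_mul, ENNReal.toReal_pow, ENNReal.toReal_natCast,
          ENNReal.toReal_ofReal hp0.le, ENNReal.toReal_ofReal hq0, ENNReal.toReal_ofNat]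
        ring
end

section
/- Let x be a real number with 0 < x ≤ 1/4 and let K be an integer with K ≥ 2. Then (K+2) x^{K/2} − 2 x^{K} ≤ (K+1−2Kx) x^{(K−1)/2} − (1−2x) x^{K−1}. -/
open MeasureTheory ProbabilityTheory Filter

theorem rpow_switch_bound_mono
    (x : ℝ) (hx0 : 0 < x) (hx : x ≤ 1 / 4) (K : ℤ) (hK : 2 ≤ K) :
    ((K : ℝ) + 2) * x ^ ((K : ℝ) / 2) - 2 * x ^ (K : ℝ)
      ≤ ((K : ℝ) + 1 - 2 * K * x) * x ^ (((K : ℝ) - 1) / 2)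
          - (1 - 2 * x) * x ^ ((K : ℝ) - 1) := by
  have hK' : (2 : ℝ) ≤ (K : ℝ) := by exact_mod_cast hK
  set s : ℝ := x ^ ((1 : ℝ) / 2) with hsdef
  set y : ℝ := x ^ (((K : ℝ) - 1) / 2) with hydef
  have hs0 : 0 ≤ s := Real.rpow_nonneg hx0.le _
  have hy0 : 0 ≤ y := Real.rpow_nonneg hx0.le _
  have hs2 : s ^ 2 = x := by
    rw [hsdef, ← Real.rpow_natCast (x ^ ((1:ℝ)/2)), ← Real.rpow_mul hx0.le]
    norm_num
  have hy2 : y ^ 2 = x ^ ((K : ℝ) - 1) := by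
    rw [hydef, ← Real.rpow_natCast (x ^ (((K:ℝ)-1)/2)), ← Real.rpow_mul hx0.le]
    norm_num
  have h1 : x ^ ((K : ℝ) / 2) = y * s := by
    rw [hydef, hsdef, ← Real.rpow_add hx0]
    ring_nf
  have h2 : x ^ (K : ℝ) = y ^ 2 * x := by
    rw [hy2, ← Real.rpow_add_one hx0.ne' ((K:ℝ) - 1)]
    ring_nf
  have hys : y ≤ s := by
    rw [hydef, hsdef]
    apply Real.rpow_le_rpow_of_exponent_ge hx0 (by linarith) (by linarith)
  have hs : s ≤ 1 / 2 := by nlinarith [hs2]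
  rw [h1, h2, ← hy2, ← hs2]
  have hfact : 0 ≤ (1 - 2 * s) * ((K : ℝ) + 1 + ((K : ℝ) - 1) * s - 2 * s ^ 2) := by
    apply mul_nonneg (by linarith)
    nlinarith
  nlinarith [mul_nonneg hy0 hfact,
    mul_nonneg (mul_nonneg (sub_nonneg.2 hys) hy0) (by nlinarith : (0:ℝ) ≤ 1 - 4 * s ^ 2),
    mul_nonneg hy0 hs0, sq_nonneg (s - y), sq_nonneg y]
end
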